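/- arXiv:math/0112230 — 5 statements merged into one kernel-verified Lean document; each statement's English description precedes it below -/
import Mathlib

section
/- Let f be a non-negative bounded random variable on a probability space with sub-σ-algebra G. Then E[f^{n/(n-1)} | G]^{(n-1)/n} converges almost surely to E[f | G] as n → ∞. -/
open MeasureTheory Filter Topology

/-- Uniform bound: for `x ∈ [0, C]`, `q ∈ [0, 1]`, `|x ^ (1+q) - x| ≤ q * (C^3 + 1)`. -/
lemma rpow_one_add_sub_abs_le {C : ℝ} (hC : 1 ≤ C) {x : ℝ} (hx0 : 0 ≤ x) (hxC : x ≤ C)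
    {q : ℝ} (hq0 : 0 ≤ q) (hq1 : q ≤ 1) :
    |x ^ (1 + q) - x| ≤ q * (C ^ 3 + 1) := by
  have hCpos : (0:ℝ) < C := by linarith
  have hC3 : (1:ℝ) ≤ C ^ 3 := by
    have := pow_le_pow_left₀ zero_le_one hC 3
    simpa using this
  have hK : (0:ℝ) ≤ C ^ 3 + 1 := by linarith
  rcases eq_or_lt_of_le hx0 with rfl | hx
  · rw [Real.zero_rpow (by linarith : (1:ℝ) + q ≠ 0)]
    simpa using mul_nonneg hq0 hK
  · have hsplit : x ^ (1 + q) - x = x * (x ^ q - 1) := by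
      rw [Real.rpow_add hx, Real.rpow_one]; ring
    rw [hsplit, abs_mul, abs_of_pos hx]
    by_cases hx1 : 1 ≤ x
    · have hxq1 : 1 ≤ x ^ q := Real.one_le_rpow hx1 hq0
      rw [abs_of_nonneg (by linarith)]
      -- x^q = exp(q log x)
      have hlog : 0 ≤ Real.log x := Real.log_nonneg hx1
      have ht : 0 ≤ q * Real.log x := mul_nonneg hq0 hlog
      -- exp t - 1 ≤ t * exp t
      have hexp : Real.exp (q * Real.log x) - 1 ≤
          (q * Real.log x) * Real.exp (q * Real.log x) := by
        have h1 := Real.add_one_le_exp (-(q * Real.log x))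
        have h2 : Real.exp (-(q * Real.log x)) * Real.exp (q * Real.log x) = 1 := by
          rw [← Real.exp_add]; simp
        nlinarith [Real.exp_pos (q * Real.log x)]
      have hxqdef : x ^ q = Real.exp (q * Real.log x) := by
        rw [Real.rpow_def_of_pos hx, mul_comm]
      have hxqx : x ^ q ≤ x := by
        have := Real.rpow_le_rpow_of_exponent_le hx1 hq1
        rwa [Real.rpow_one] at this
      have hlogx : Real.log x ≤ x := by
        have := Real.log_le_sub_one_of_pos hx; linarith
      have h3 : x ^ q - 1 ≤ q * Real.log x * x ^ q := by rw [hxqdef]; exact hexp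
      have hxC3 : x * (x * x) ≤ C ^ 3 := by
        calc x * (x * x) = x ^ 3 := by ring
          _ ≤ C ^ 3 := pow_le_pow_left₀ hx0 hxC 3
      calc x * (x ^ q - 1) ≤ x * (q * Real.log x * x ^ q) := by
            apply mul_le_mul_of_nonneg_left h3 (le_of_lt hx)
        _ = q * (x * (Real.log x * x ^ q)) := by ring
        _ ≤ q * (C ^ 3 + 1) := by
            have hstep : Real.log x * x ^ q ≤ x * x :=
              mul_le_mul hlogx hxqx (Real.rpow_nonneg hx0 q) (by linarith)
            have hstep2 : x * (Real.log x * x ^ q) ≤ x * (x * x) :=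
              mul_le_mul_of_nonneg_left hstep hx.le
            apply mul_le_mul_of_nonneg_left _ hq0
            linarith
    · push_neg at hx1
      have hxq1 : x ^ q ≤ 1 := Real.rpow_le_one hx0 hx1.le hq0
      rw [abs_of_nonpos (by linarith), neg_sub]
      -- 1 - x^q ≤ -(q log x)
      have hxqdef : x ^ q = Real.exp (q * Real.log x) := by
        rw [Real.rpow_def_of_pos hx, mul_comm]
      have h1 : 1 - x ^ q ≤ -(q * Real.log x) := by
        have := Real.add_one_le_exp (q * Real.log x)
        rw [hxqdef]; linarith
      -- -x log x ≤ 1 - x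
      have h2 : -(x * Real.log x) ≤ 1 - x := by
        have h3 := Real.log_le_sub_one_of_pos (inv_pos.mpr hx)
        rw [Real.log_inv] at h3
        have h4 : x * (-Real.log x) ≤ x * (x⁻¹ - 1) :=
          mul_le_mul_of_nonneg_left h3 hx.le
        rw [mul_sub, mul_inv_cancel₀ (ne_of_gt hx)] at h4
        linarith
      calc x * (1 - x ^ q) ≤ x * (-(q * Real.log x)) :=
            mul_le_mul_of_nonneg_left h1 hx.le
        _ = q * (-(x * Real.log x)) := by ring
        _ ≤ q * (1 - x) := mul_le_mul_of_nonneg_left h2 hq0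
        _ ≤ q * (C ^ 3 + 1) := by
            apply mul_le_mul_of_nonneg_left _ hq0
            linarith

theorem condexp_power_tendsto
    {Ω : Type*} (G : MeasurableSpace Ω) {F : MeasurableSpace Ω} (μ : Measure Ω) [IsProbabilityMeasure μ]
    (hG : G ≤ F)
    (f : Ω → ℝ) (M : ℝ)
    (hmeas : Measurable f)
    (hnonneg : ∀ ω, 0 ≤ f ω)
    (hbdd : ∀ ω, f ω ≤ M) :
    ∀ᵐ ω ∂μ, Tendsto
      (fun n : ℕ => (μ[fun ω' => f ω' ^ ((n : ℝ) / ((n : ℝ) - 1)) | G]) ω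
        ^ (((n : ℝ) - 1) / (n : ℝ)))
      atTop (𝓝 ((μ[f | G]) ω)) := by
  set C : ℝ := max M 1 with hCdef
  have hC1 : (1:ℝ) ≤ C := le_max_right _ _
  have hfC : ∀ ω, f ω ≤ C := fun ω => le_max_of_le_left (hbdd ω)
  set K : ℝ := C ^ 3 + 1 with hKdef
  have hK0 : (0:ℝ) ≤ K := by rw [hKdef]; nlinarith [sq_nonneg C, sq_nonneg (C-1), sq_nonneg (C+1)]
  have hmeasF : @Measurable Ω ℝ F _ f := hmeas
  -- integrability of f ^ p for p ≥ 0
  have hint : ∀ p : ℝ, 0 ≤ p → Integrable (fun ω => f ω ^ p) μ := by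
    intro p hp
    have hmp : @Measurable Ω ℝ F _ (fun ω => f ω ^ p) :=
      (Real.continuous_rpow_const hp).measurable.comp hmeasF
    refine Integrable.mono' (integrable_const (C ^ p)) (hmp.aestronglyMeasurable (μ := μ)) ?_
    filter_upwards with ω
    rw [Real.norm_eq_abs, abs_of_nonneg (Real.rpow_nonneg (hnonneg ω) p)]
    exact Real.rpow_le_rpow (hnonneg ω) (hfC ω) hp
  have hintf : Integrable f μ := by
    have := hint 1 zero_le_one; simpa [Real.rpow_one] using this
  -- exponent sequence
  set q : ℕ → ℝ := fun n => 1 / ((n : ℝ) - 1) with hqdef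
  have hq_tendsto : Tendsto q atTop (𝓝 0) := by
    have h1 : Tendsto (fun n : ℕ => (n : ℝ) - 1) atTop atTop := by
      simpa [sub_eq_add_neg] using
        (tendsto_atTop_add_const_right atTop (-1 : ℝ) tendsto_natCast_atTop_atTop)
    simpa [hqdef, one_div, Pi.inv_def] using h1.inv_tendsto_atTop
  have hqn : ∀ n : ℕ, 2 ≤ n → 0 ≤ q n ∧ q n ≤ 1 ∧
      (n : ℝ) / ((n : ℝ) - 1) = 1 + q n := by
    intro n hn
    have hn2 : (2:ℝ) ≤ (n:ℝ) := by exact_mod_cast hn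
    have hne : (n:ℝ) - 1 ≠ 0 := by linarith
    refine ⟨div_nonneg zero_le_one (by linarith), ?_, ?_⟩
    · rw [hqdef]; rw [div_le_one (by linarith)]; linarith
    · rw [hqdef]; field_simp; ring
  -- conditional expectation of f + const
  have haddc : ∀ c : ℝ, μ[fun ω => f ω + c|G] =ᵐ[μ] fun ω => (μ[f|G]) ω + c := by
    intro c
    have h1 := condExp_add (m := G) hintf (integrable_const c)
    have h2 : μ[fun _ : Ω => c|G] = fun _ => c := condExp_const hG c
    filter_upwards [h1] with ω hω
    rw [h2] at hω; exact hω
  -- a.e. bounds for each n ≥ 2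
  have hbound : ∀ n : ℕ, 2 ≤ n →
      (∀ᵐ ω ∂μ, (μ[fun ω' => f ω' ^ ((n : ℝ) / ((n : ℝ) - 1))|G]) ω
          ≤ (μ[f|G]) ω + q n * K) ∧
      (∀ᵐ ω ∂μ, (μ[f|G]) ω - q n * K
          ≤ (μ[fun ω' => f ω' ^ ((n : ℝ) / ((n : ℝ) - 1))|G]) ω) := by
    intro n hn
    obtain ⟨hq0, hq1, hpe⟩ := hqn n hn
    have hptw : ∀ ω, |f ω ^ ((n : ℝ) / ((n : ℝ) - 1)) - f ω| ≤ q n * K := by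
      intro ω
      rw [hpe]
      exact rpow_one_add_sub_abs_le hC1 (hnonneg ω) (hfC ω) hq0 hq1
    have hintg : Integrable (fun ω => f ω ^ ((n : ℝ) / ((n : ℝ) - 1))) μ := by
      apply hint; rw [hpe]; linarith
    constructor
    · have hm : μ[fun ω' => f ω' ^ ((n : ℝ) / ((n : ℝ) - 1))|G]
          ≤ᵐ[μ] μ[fun ω => f ω + q n * K|G] := by
        apply condExp_mono hintg (hintf.add (integrable_const _))
        filter_upwards with ω
        have h2 := (abs_le.mp (hptw ω)).2
        show f ω ^ ((n : ℝ) / ((n : ℝ) - 1)) ≤ f ω + q n * K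
        linarith
      filter_upwards [hm, haddc (q n * K)] with ω h1 h2
      calc _ ≤ _ := h1
        _ = _ := h2
    · have hm : μ[fun ω => f ω + (-(q n * K))|G]
          ≤ᵐ[μ] μ[fun ω' => f ω' ^ ((n : ℝ) / ((n : ℝ) - 1))|G] := by
        apply condExp_mono (hintf.add (integrable_const _)) hintg
        filter_upwards with ω
        have h := (abs_le.mp (hptw ω)).1
        show f ω + -(q n * K) ≤ f ω ^ ((n : ℝ) / ((n : ℝ) - 1))
        linarith
      filter_upwards [hm, haddc (-(q n * K))] with ω h1 h2
      have : (μ[f|G]) ω + (-(q n * K)) ≤ _ := h2 ▸ h1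
      linarith
  -- collect a.e. statements
  have hae : ∀ᵐ ω ∂μ, ∀ n : ℕ, 2 ≤ n →
      ((μ[fun ω' => f ω' ^ ((n : ℝ) / ((n : ℝ) - 1))|G]) ω ≤ (μ[f|G]) ω + q n * K ∧
       (μ[f|G]) ω - q n * K ≤ (μ[fun ω' => f ω' ^ ((n : ℝ) / ((n : ℝ) - 1))|G]) ω) := by
    rw [ae_all_iff]
    intro n
    by_cases hn : 2 ≤ n
    · obtain ⟨h1, h2⟩ := hbound n hn
      filter_upwards [h1, h2] with ω hω1 hω2 _
      exact ⟨hω1, hω2⟩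
    · filter_upwards with ω hn'; exact absurd hn' hn
  filter_upwards [hae] with ω hω
  set L : ℝ := (μ[f|G]) ω with hL
  -- inner convergence
  have ha : Tendsto (fun n : ℕ =>
      (μ[fun ω' => f ω' ^ ((n : ℝ) / ((n : ℝ) - 1))|G]) ω) atTop (𝓝 L) := by
    have hlow : Tendsto (fun n : ℕ => L - q n * K) atTop (𝓝 L) := by
      have := tendsto_const_nhds (x := L) (f := atTop (α := ℕ)) |>.sub
        ((hq_tendsto.mul_const K))
      simpa only [zero_mul, sub_zero] using this
    have hhigh : Tendsto (fun n : ℕ => L + q n * K) atTop (𝓝 L) := by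
      have := tendsto_const_nhds (x := L) (f := atTop (α := ℕ)) |>.add
        ((hq_tendsto.mul_const K))
      simpa only [zero_mul, add_zero] using this
    apply tendsto_of_tendsto_of_tendsto_of_le_of_le' hlow hhigh
    · filter_upwards [eventually_ge_atTop 2] with n hn
      exact (hω n hn).2
    · filter_upwards [eventually_ge_atTop 2] with n hn
      exact (hω n hn).1
  -- outer exponent convergence
  have hb : Tendsto (fun n : ℕ => ((n : ℝ) - 1) / (n : ℝ)) atTop (𝓝 1) := by
    have h1 : Tendsto (fun n : ℕ => 1 - 1 / (n : ℝ)) atTop (𝓝 1) := by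
      have := tendsto_const_nhds (x := (1:ℝ)) (f := atTop (α := ℕ)) |>.sub
        tendsto_one_div_atTop_nhds_zero_nat
      simpa using this
    apply h1.congr'
    filter_upwards [eventually_ge_atTop 1] with n hn
    have hne : (n:ℝ) ≠ 0 := by
      have : (1:ℝ) ≤ (n:ℝ) := by exact_mod_cast hn
      linarith
    field_simp
  have hcont : ContinuousAt (fun p : ℝ × ℝ => p.1 ^ p.2) (L, 1) :=
    Real.continuousAt_rpow (L, 1) (Or.inr one_pos)
  have := hcont.tendsto.comp (ha.prodMk_nhds hb)
  simpa [Function.comp_def, Real.rpow_one] using this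
end

section
/- Dybvig–Ingersoll–Ross theorem: In an arbitrage-free bond market where discounted bond prices B_t^{-1} P(t,T) are Q-martingales, if for fixed times s ≤ t the limits x_L(s) = lim_{T→∞} P(s,T)^{1/T} and x_L(t) = lim_{T→∞} P(t,T)^{1/T} exist almost surely and are finite, then x_L(s) ≥ x_L(t) almost surely. -/
/-!
Fix `0 ≤ a < c` and `N`, let `S` be the `ℱ s`-event `P(s,T) ≤ a^T` for all `T ≥ N`, and `G ⊆ S`
the `ℱ t`-event where moreover `c^T ≤ P(t,T)` for all `T ≥ N`. With the positive discount factor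
`Y = B_s / B_t`, the martingale property at `t` and then at `s` gives, for large `T`,
`c^T E[Y; G] ≤ E[Y P(t,T); G] = E[B_s / B_T; G] ≤ E[B_s / B_T; S] = E[P(s,T); S] ≤ a^T`,
so `E[Y; G] = 0` and `G` is null. If `x_L(s) < x_L(t)` at `ω`, rationals `x_L(s) < a < c < x_L(t)`
place `ω` in one of these countably many null events.
-/

open MeasureTheory Filter Topology

theorem eq_zero_of_pow_mul_le_pow_mul {a c x K : ℝ} (ha : 0 ≤ a) (hac : a < c) (hx : 0 ≤ x)
    (h : ∀ᶠ T : ℕ in atTop, c ^ T * x ≤ a ^ T * K) : x = 0 := by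
  have hc : 0 < c := ha.trans_lt hac
  have hdecay : Tendsto (fun T : ℕ => (a / c) ^ T * K) atTop (𝓝 0) := by
    simpa using (tendsto_pow_atTop_nhds_zero_of_lt_one (div_nonneg ha hc.le)
      ((div_lt_one hc).2 hac)).mul_const K
  refine le_antisymm (ge_of_tendsto hdecay (h.mono fun T hT => ?_)) hx
  rw [div_pow, div_mul_eq_mul_div, le_div_iff₀ (pow_pos hc T)]
  linarith

theorem eventually_le_pow_of_tendsto_rpow_inv {p : ℕ → ℝ} {x a : ℝ} (hp : ∀ T, 0 ≤ p T)
    (h : Tendsto (fun T : ℕ => p T ^ (T : ℝ)⁻¹) atTop (𝓝 x)) (hxa : x < a) :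
    ∀ᶠ T in atTop, p T ≤ a ^ T := by
  filter_upwards [h.eventually_lt_const hxa, eventually_ne_atTop 0] with T hT hT0
  calc p T = (p T ^ (T : ℝ)⁻¹) ^ T := (Real.rpow_inv_natCast_pow (hp T) hT0).symm
    _ ≤ a ^ T := pow_le_pow_left₀ (Real.rpow_nonneg (hp T) _) hT.le T

theorem eventually_pow_le_of_tendsto_rpow_inv {p : ℕ → ℝ} {x c : ℝ} (hp : ∀ T, 0 ≤ p T)
    (h : Tendsto (fun T : ℕ => p T ^ (T : ℝ)⁻¹) atTop (𝓝 x)) (hc : 0 ≤ c) (hcx : c < x) :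
    ∀ᶠ T in atTop, c ^ T ≤ p T := by
  filter_upwards [h.eventually_const_lt hcx, eventually_ne_atTop 0] with T hT hT0
  calc c ^ T ≤ (p T ^ (T : ℝ)⁻¹) ^ T := pow_le_pow_left₀ hc hT.le T
    _ = p T := Real.rpow_inv_natCast_pow (hp T) hT0

section BondMarket

variable {Ω : Type*} {m0 : MeasurableSpace Ω} {Q : Measure Ω} {ℱ : ℕ → MeasurableSpace Ω}
  {B : ℕ → Ω → ℝ}

variable (Q ℱ B) in
noncomputable def bondPrice (u T : ℕ) : Ω → ℝ := Q[fun ω => B u ω / B T ω | ℱ u]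

theorem setIntegral_mul_condExp_of_stronglyMeasurable_left {m : MeasurableSpace Ω}
    (hm : m ≤ m0) [SigmaFinite (Q.trim hm)] {G : Set Ω} (hG : MeasurableSet[m] G) {Y X : Ω → ℝ}
    (hY : StronglyMeasurable[m] Y) (hYX : Integrable (Y * X) Q) (hX : Integrable X Q) :
    ∫ ω in G, Y ω * Q[X|m] ω ∂Q = ∫ ω in G, Y ω * X ω ∂Q := by
  calc ∫ ω in G, Y ω * Q[X|m] ω ∂Q = ∫ ω in G, Q[Y * X|m] ω ∂Q :=
        setIntegral_congr_ae (hm G hG)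
          ((condExp_mul_of_stronglyMeasurable_left hY hYX hX).mono fun ω hω _ => hω.symm)
    _ = ∫ ω in G, Y ω * X ω ∂Q := setIntegral_condExp hm hYX hG

theorem pow_mul_setIntegral_div_le [IsFiniteMeasure Q] (hℱ_mono : Monotone ℱ)
    (hℱ_le : ∀ u, ℱ u ≤ m0) (hBpos : ∀ u ω, 0 < B u ω)
    (hBadapted : ∀ u, Measurable[ℱ u] (B u))
    (hBint : ∀ u T, u ≤ T → Integrable (fun ω => B u ω / B T ω) Q)
    {s t T : ℕ} (hst : s ≤ t) (htT : t ≤ T) {a c : ℝ} {S G : Set Ω}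
    (hS : MeasurableSet[ℱ s] S) (hG : MeasurableSet[ℱ t] G) (hGS : G ⊆ S)
    (hSa : ∀ ω ∈ S, bondPrice Q ℱ B s T ω ≤ a ^ T)
    (hGc : ∀ ω ∈ G, c ^ T ≤ bondPrice Q ℱ B t T ω) :
    c ^ T * ∫ ω in G, B s ω / B t ω ∂Q ≤ a ^ T * Q.real S := by
  set Y : Ω → ℝ := fun ω => B s ω / B t ω
  have hY : StronglyMeasurable[ℱ t] Y :=
    (((hBadapted s).mono (hℱ_mono hst) le_rfl).div (hBadapted t)).stronglyMeasurable
  have hY_nonneg : ∀ ω, 0 ≤ Y ω := fun ω => (div_pos (hBpos s ω) (hBpos t ω)).le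
  have hsT : Integrable (fun ω => B s ω / B T ω) Q := hBint s T (hst.trans htT)
  have hdiscount : (Y * fun ω => B t ω / B T ω) = fun ω => B s ω / B T ω :=
    funext fun ω => div_mul_div_cancel₀ (hBpos t ω).ne'
  have hYX : Integrable (Y * fun ω => B t ω / B T ω) Q := hdiscount ▸ hsT
  have hYP : Integrable (fun ω => Y ω * bondPrice Q ℱ B t T ω) Q :=
    integrable_condExp.congr (condExp_mul_of_stronglyMeasurable_left hY hYX (hBint t T htT))
  calc c ^ T * ∫ ω in G, Y ω ∂Q = ∫ ω in G, c ^ T * Y ω ∂Q := (integral_const_mul _ _).symm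
    _ ≤ ∫ ω in G, Y ω * bondPrice Q ℱ B t T ω ∂Q := by
        refine setIntegral_mono_on ((hBint s t hst).const_mul _).integrableOn hYP.integrableOn
          (hℱ_le t G hG) fun ω hω => ?_
        rw [mul_comm]
        exact mul_le_mul_of_nonneg_left (hGc ω hω) (hY_nonneg ω)
    _ = ∫ ω in G, B s ω / B T ω ∂Q := by
        rw [bondPrice, setIntegral_mul_condExp_of_stronglyMeasurable_left (hℱ_le t) hG hY hYX
          (hBint t T htT)]
        exact congrArg (fun f => ∫ ω in G, f ω ∂Q) hdiscount
    _ ≤ ∫ ω in S, B s ω / B T ω ∂Q :=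
        setIntegral_mono_set hsT.integrableOn
          (ae_of_all _ fun ω => (div_pos (hBpos s ω) (hBpos T ω)).le) hGS.eventuallyLE
    _ = ∫ ω in S, bondPrice Q ℱ B s T ω ∂Q := (setIntegral_condExp (hℱ_le s) hsT hS).symm
    _ ≤ ∫ _ in S, a ^ T ∂Q :=
        setIntegral_mono_on integrable_condExp.integrableOn integrableOn_const (hℱ_le s S hS) hSa
    _ = a ^ T * Q.real S := by rw [setIntegral_const, smul_eq_mul, mul_comm]

theorem measurableSet_forall_bondPrice_le_pow (s N : ℕ) (a : ℝ) :
    MeasurableSet[ℱ s] {ω | ∀ T ≥ N, bondPrice Q ℱ B s T ω ≤ a ^ T} := by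
  simp only [Set.ofPred_forall]
  exact .iInter fun T => .iInter fun _ =>
    measurableSet_le stronglyMeasurable_condExp.measurable measurable_const

theorem measurableSet_forall_pow_le_bondPrice (t N : ℕ) (c : ℝ) :
    MeasurableSet[ℱ t] {ω | ∀ T ≥ N, c ^ T ≤ bondPrice Q ℱ B t T ω} := by
  simp only [Set.ofPred_forall]
  exact .iInter fun T => .iInter fun _ =>
    measurableSet_le measurable_const stronglyMeasurable_condExp.measurable

theorem measure_forall_bondPrice_le_pow_inter_forall_pow_le_bondPrice_eq_zero [IsFiniteMeasure Q]
    (hℱ_mono : Monotone ℱ) (hℱ_le : ∀ u, ℱ u ≤ m0) (hBpos : ∀ u ω, 0 < B u ω)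
    (hBadapted : ∀ u, Measurable[ℱ u] (B u))
    (hBint : ∀ u T, u ≤ T → Integrable (fun ω => B u ω / B T ω) Q)
    {s t : ℕ} (hst : s ≤ t) {a c : ℝ} (ha : 0 ≤ a) (hac : a < c) (N : ℕ) :
    Q ({ω | ∀ T ≥ N, bondPrice Q ℱ B s T ω ≤ a ^ T} ∩
      {ω | ∀ T ≥ N, c ^ T ≤ bondPrice Q ℱ B t T ω}) = 0 := by
  set S := {ω | ∀ T ≥ N, bondPrice Q ℱ B s T ω ≤ a ^ T}
  set G := S ∩ {ω | ∀ T ≥ N, c ^ T ≤ bondPrice Q ℱ B t T ω}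
  have hS : MeasurableSet[ℱ s] S := measurableSet_forall_bondPrice_le_pow s N a
  have hG : MeasurableSet[ℱ t] G :=
    (hℱ_mono hst _ hS).inter (measurableSet_forall_pow_le_bondPrice t N c)
  have hY_pos : ∀ ω, 0 < B s ω / B t ω := fun ω => div_pos (hBpos s ω) (hBpos t ω)
  have hintegral_eq_zero : ∫ ω in G, B s ω / B t ω ∂Q = 0 :=
    eq_zero_of_pow_mul_le_pow_mul ha hac
      (setIntegral_nonneg (hℱ_le t _ hG) fun ω _ => (hY_pos ω).le)
      (eventually_atTop.2 ⟨max t N, fun T hT =>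
        pow_mul_setIntegral_div_le hℱ_mono hℱ_le hBpos hBadapted hBint hst (le_of_max_le_left hT)
          hS hG Set.inter_subset_left (fun ω hω => hω T (le_of_max_le_right hT))
          (fun ω hω => hω.2 T (le_of_max_le_right hT))⟩)
  have hpos_iff := setIntegral_pos_iff_support_of_nonneg_ae (s := G)
    (ae_of_all _ fun ω => (hY_pos ω).le) (hBint s t hst).integrableOn
  simpa [hintegral_eq_zero, Function.support_eq_univ fun ω => (hY_pos ω).ne'] using hpos_iff

theorem ae_not_eventually_bondPrice_le_pow_and_pow_le_bondPrice [IsFiniteMeasure Q]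
    (hℱ_mono : Monotone ℱ) (hℱ_le : ∀ u, ℱ u ≤ m0) (hBpos : ∀ u ω, 0 < B u ω)
    (hBadapted : ∀ u, Measurable[ℱ u] (B u))
    (hBint : ∀ u T, u ≤ T → Integrable (fun ω => B u ω / B T ω) Q)
    {s t : ℕ} (hst : s ≤ t) {a c : ℝ} (ha : 0 ≤ a) (hac : a < c) :
    ∀ᵐ ω ∂Q, ¬∀ᶠ T in atTop, bondPrice Q ℱ B s T ω ≤ a ^ T ∧ c ^ T ≤ bondPrice Q ℱ B t T ω := by
  simp only [eventually_atTop, not_exists, ae_all_iff]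
  intro N
  filter_upwards [measure_eq_zero_iff_ae_notMem.1
    (measure_forall_bondPrice_le_pow_inter_forall_pow_le_bondPrice_eq_zero hℱ_mono hℱ_le hBpos
      hBadapted hBint hst ha hac N)] with ω hω hN
  exact hω ⟨fun T hT => (hN T hT).1, fun T hT => (hN T hT).2⟩

theorem ae_le_of_tendsto_bondPrice_rpow_inv [IsFiniteMeasure Q]
    (hℱ_mono : Monotone ℱ) (hℱ_le : ∀ u, ℱ u ≤ m0) (hBpos : ∀ u ω, 0 < B u ω)
    (hBadapted : ∀ u, Measurable[ℱ u] (B u))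
    (hBint : ∀ u T, u ≤ T → Integrable (fun ω => B u ω / B T ω) Q)
    {s t : ℕ} (hst : s ≤ t) {xs xt : Ω → ℝ}
    (hxs : ∀ᵐ ω ∂Q, Tendsto (fun T : ℕ => bondPrice Q ℱ B s T ω ^ (T : ℝ)⁻¹) atTop (𝓝 (xs ω)))
    (hxt : ∀ᵐ ω ∂Q, Tendsto (fun T : ℕ => bondPrice Q ℱ B t T ω ^ (T : ℝ)⁻¹) atTop (𝓝 (xt ω))) :
    ∀ᵐ ω ∂Q, xt ω ≤ xs ω := by
  have hnonneg : ∀ u, ∀ᵐ ω ∂Q, ∀ T, 0 ≤ bondPrice Q ℱ B u T ω := fun u => ae_all_iff.2 fun T =>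
    condExp_nonneg (ae_of_all _ fun ω => (div_pos (hBpos u ω) (hBpos T ω)).le)
  have hnull : ∀ᵐ ω ∂Q, ∀ a c : ℚ, (0 : ℝ) ≤ a → (a : ℝ) < c →
      ¬∀ᶠ T in atTop, bondPrice Q ℱ B s T ω ≤ a ^ T ∧ c ^ T ≤ bondPrice Q ℱ B t T ω := by
    simp only [ae_all_iff, eventually_imp_distrib_left]
    exact fun a c ha hac => ae_not_eventually_bondPrice_le_pow_and_pow_le_bondPrice hℱ_mono hℱ_le
      hBpos hBadapted hBint hst ha hac
  filter_upwards [hxs, hxt, hnonneg s, hnonneg t, hnull] with ω hs ht hps hpt hω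
  by_contra! hlt
  obtain ⟨a, hxa, hac'⟩ := exists_rat_btwn hlt
  obtain ⟨c, hac, hcx⟩ := exists_rat_btwn hac'
  have ha : (0 : ℝ) ≤ a := (ge_of_tendsto' hs fun T => Real.rpow_nonneg (hps T) _).trans hxa.le
  exact hω a c ha hac ((eventually_le_pow_of_tendsto_rpow_inv hps hs hxa).and
    (eventually_pow_le_of_tendsto_rpow_inv hpt ht (ha.trans hac.le) hcx))

end BondMarket

theorem dybvig_ingersoll_ross_general
    {Ω : Type*} {F : MeasurableSpace Ω} (Q : Measure Ω) [IsProbabilityMeasure Q]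
    (ℱ : ℕ → MeasurableSpace Ω) (hℱ_mono : Monotone ℱ) (hℱ_le : ∀ u, ℱ u ≤ F)
    (B : ℕ → Ω → ℝ) (hBpos : ∀ u ω, 0 < B u ω)
    (hBadapted : ∀ u, Measurable[ℱ u] (B u))
    (hBint : ∀ u T, u ≤ T → Integrable (fun ω => B u ω / B T ω) Q)
    (P : ℕ → ℕ → Ω → ℝ)
    (hP : ∀ u T, u ≤ T → P u T =ᵐ[Q] Q[fun ω => B u ω / B T ω | ℱ u])
    (s t : ℕ) (hst : s ≤ t)
    (xLs xLt : Ω → ℝ)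
    (hxLs : ∀ᵐ ω ∂Q, Tendsto (fun T : ℕ => P s T ω ^ ((T : ℝ)⁻¹)) atTop (𝓝 (xLs ω)))
    (hxLt : ∀ᵐ ω ∂Q, Tendsto (fun T : ℕ => P t T ω ^ ((T : ℝ)⁻¹)) atTop (𝓝 (xLt ω))) :
    ∀ᵐ ω ∂Q, xLt ω ≤ xLs ω := by
  have hversion : ∀ u, ∀ᵐ ω ∂Q, ∀ᶠ T in atTop, P u T ω = bondPrice Q ℱ B u T ω := fun u => by
    have hall : ∀ᵐ ω ∂Q, ∀ T, u ≤ T → P u T ω = bondPrice Q ℱ B u T ω := by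
      simp only [ae_all_iff, eventually_imp_distrib_left]
      exact hP u
    filter_upwards [hall] with ω hω using eventually_atTop.2 ⟨u, hω⟩
  have hlimit : ∀ (u : ℕ) (x : Ω → ℝ),
      (∀ᵐ ω ∂Q, Tendsto (fun T : ℕ => P u T ω ^ ((T : ℝ)⁻¹)) atTop (𝓝 (x ω))) →
      ∀ᵐ ω ∂Q, Tendsto (fun T : ℕ => bondPrice Q ℱ B u T ω ^ ((T : ℝ)⁻¹)) atTop (𝓝 (x ω)) :=
    fun u x hx => by
      filter_upwards [hx, hversion u] with ω hω hω_eq using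
        hω.congr' (hω_eq.mono fun T hT => by rw [hT])
  exact ae_le_of_tendsto_bondPrice_rpow_inv hℱ_mono hℱ_le hBpos hBadapted hBint hst
    (hlimit s xLs hxLs) (hlimit t xLt hxLt)

/-- Dybvig-Ingersoll-Ross theorem: long forward rates can never fall. -/
theorem dybvig_ingersoll_ross
    {Ω : Type*} {F : MeasurableSpace Ω} (Q : Measure Ω) [IsProbabilityMeasure Q]
    (ℱ : ℕ → MeasurableSpace Ω) (hℱ_mono : Monotone ℱ) (hℱ_le : ∀ u, ℱ u ≤ F)
    (B : ℕ → Ω → ℝ) (hBpos : ∀ u ω, 0 < B u ω)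
    (hBadapted : ∀ u, Measurable[ℱ u] (B u))
    (hBint : ∀ u T, u ≤ T → Integrable (fun ω => B u ω / B T ω) Q)
    (P : ℕ → ℕ → Ω → ℝ)
    (hP : ∀ u T, u ≤ T → P u T =ᵐ[Q] Q[fun ω => B u ω / B T ω | ℱ u])
    (hPpos : ∀ u T, u ≤ T → ∀ᵐ ω ∂Q, 0 < P u T ω)
    (s t : ℕ) (hst : s ≤ t)
    (xLs xLt : Ω → ℝ)
    (hxLs : ∀ᵐ ω ∂Q, Tendsto (fun T : ℕ => P s T ω ^ ((T : ℝ)⁻¹)) atTop (𝓝 (xLs ω)))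
    (hxLt : ∀ᵐ ω ∂Q, Tendsto (fun T : ℕ => P t T ω ^ ((T : ℝ)⁻¹)) atTop (𝓝 (xLt ω))) :
    ∀ᵐ ω ∂Q, xLt ω ≤ xLs ω :=
  dybvig_ingersoll_ross_general Q ℱ hℱ_mono hℱ_le B hBpos hBadapted hBint P hP s t hst xLs xLt hxLs
    hxLt
end

section
/- Let Q̃ be a probability measure with sub-σ-algebra F_s, and let Y_T ≥ 0 be random variables such that Y_T^{1/T} converges almost surely to a finite limit x as T → ∞, and such that Ẽ[Y_T | F_s]^{1/T} converges almost surely to a finite limit y as T → ∞. Then y ≥ x almost surely. -/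
open MeasureTheory Filter Topology

theorem root_limit_conditional_ineq
    {Ω : Type*} (Fs : MeasurableSpace Ω) {F : MeasurableSpace Ω} (Qtilde : Measure Ω) [IsProbabilityMeasure Qtilde]
    (hFs : Fs ≤ F)
    (Y : ℕ → Ω → ℝ) (x y : Ω → ℝ)
    (hYmeas : ∀ T, Measurable (Y T)) (hYnonneg : ∀ T ω, 0 ≤ Y T ω)
    (hYint : ∀ T, Integrable (Y T) Qtilde)
    (hx : ∀ᵐ ω ∂Qtilde, Tendsto (fun T : ℕ => Y T ω ^ ((T : ℝ)⁻¹)) atTop (𝓝 (x ω)))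
    (hy : ∀ᵐ ω ∂Qtilde,
      Tendsto (fun T : ℕ => (Qtilde[Y T | Fs]) ω ^ ((T : ℝ)⁻¹)) atTop (𝓝 (y ω))) :
    ∀ᵐ ω ∂Qtilde, x ω ≤ y ω := by
  letI : MeasurableSpace Ω := F
  have hYmeasF : ∀ T, Measurable[F] (Y T) := fun T => (hYmeas T)
  set Z : ℕ → Ω → ℝ := fun T => Qtilde[Y T | Fs] with hZdef
  have hZmeas : ∀ T, Measurable[Fs] (Z T) := fun T =>
    (stronglyMeasurable_condExp (m := Fs)).measurable
  have hZint : ∀ T, Integrable (Z T) Qtilde := fun T => integrable_condExp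
  -- y is a.e. nonneg
  have hynn : ∀ᵐ ω ∂Qtilde, 0 ≤ y ω := by
    have hZnn : ∀ᵐ ω ∂Qtilde, ∀ T, 0 ≤ Z T ω := by
      rw [MeasureTheory.ae_all_iff]
      exact fun T => condExp_nonneg (Eventually.of_forall (hYnonneg T))
    filter_upwards [hy, hZnn] with ω hωy hωZ
    exact le_of_tendsto_of_tendsto' tendsto_const_nhds hωy
      (fun T => Real.rpow_nonneg (hωZ T) _)
  -- the key rational separation lemma
  have key : ∀ q' q : ℝ, 0 < q' → q' < q →
      ∀ᵐ ω ∂Qtilde, ¬ (q < x ω ∧ y ω < q') := by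
    intro q' q hq' hqq
    have hq : 0 < q := hq'.trans hqq
    set u : ℕ → Ω → ENNReal := fun T ω => ENNReal.ofReal (Y T ω ^ ((T : ℝ)⁻¹)) with hu
    set v : ℕ → Ω → ENNReal := fun T ω => ENNReal.ofReal (Z T ω ^ ((T : ℝ)⁻¹)) with hv
    have hcont : ∀ T : ℕ, Continuous (fun z : ℝ => z ^ ((T : ℝ)⁻¹)) := fun T =>
      Real.continuous_rpow_const (by positivity)
    have hu_meas : ∀ T, Measurable (fun ω => u T ω) := fun T =>
      (((hcont T).measurable.comp (hYmeasF T))).ennreal_ofReal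
    have hv_meas : ∀ T, Measurable[Fs] (fun ω => v T ω) := fun T =>
      (((hcont T).measurable.comp (hZmeas T))).ennreal_ofReal
    set A : Set Ω := {ω | ENNReal.ofReal q < atTop.liminf (fun T => u T ω)} with hA
    set B : Set Ω := {ω | atTop.limsup (fun T => v T ω) < ENNReal.ofReal q'} with hB
    have hA_meas : MeasurableSet A :=
      measurableSet_lt measurable_const (Measurable.liminf hu_meas)
    have hB_measFs : MeasurableSet[Fs] B :=
      measurableSet_lt (Measurable.limsup hv_meas) measurable_const
    have hB_meas : MeasurableSet B := hFs _ hB_measFs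
    -- pointwise eventual bounds on A and B
    have hAev : ∀ ω ∈ A, ∀ᶠ T : ℕ in atTop, q ^ T < Y T ω := by
      intro ω hω
      have h1 : ∀ᶠ T : ℕ in atTop, ENNReal.ofReal q < u T ω :=
        eventually_lt_of_lt_liminf hω
      filter_upwards [h1, eventually_ge_atTop 1] with T hT hT1
      have hlt : q < Y T ω ^ ((T : ℝ)⁻¹) := by
        by_contra hc
        exact absurd (ENNReal.ofReal_le_ofReal (not_lt.1 hc)) (not_le.2 hT)
      calc q ^ T < (Y T ω ^ ((T : ℝ)⁻¹)) ^ T := by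
            exact pow_lt_pow_left₀ hlt hq.le (by omega)
        _ = Y T ω := Real.rpow_inv_natCast_pow (hYnonneg T ω) (by omega)
    have hBev : ∀ ω ∈ B, ∀ᶠ T : ℕ in atTop, Z T ω < q' ^ T := by
      intro ω hω
      have h1 : ∀ᶠ T : ℕ in atTop, v T ω < ENNReal.ofReal q' :=
        eventually_lt_of_limsup_lt hω
      filter_upwards [h1, eventually_ge_atTop 1] with T hT hT1
      have hlt : Z T ω ^ ((T : ℝ)⁻¹) < q' :=
        (ENNReal.ofReal_lt_ofReal_iff hq').1 hT
      rcases le_or_gt 0 (Z T ω) with hZ0 | hZ0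
      · calc Z T ω = (Z T ω ^ ((T : ℝ)⁻¹)) ^ T :=
              (Real.rpow_inv_natCast_pow hZ0 (by omega)).symm
          _ < q' ^ T := pow_lt_pow_left₀ hlt (Real.rpow_nonneg hZ0 _) (by omega)
      · exact hZ0.trans (pow_pos hq' T)
    -- the bad set is a.e. contained in A ∩ B
    have hsub : ∀ᵐ ω ∂Qtilde, (q < x ω ∧ y ω < q') → ω ∈ A ∩ B := by
      filter_upwards [hx, hy, hynn] with ω hωx hωy hωyn h
      constructor
      · have hlim : Tendsto (fun T => u T ω) atTop (𝓝 (ENNReal.ofReal (x ω))) :=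
          (ENNReal.continuous_ofReal.tendsto _).comp hωx
        rw [hA, Set.mem_setOf_eq, hlim.liminf_eq]
        exact (ENNReal.ofReal_lt_ofReal_iff (hq.trans h.1)).2 h.1
      · have hlim : Tendsto (fun T => v T ω) atTop (𝓝 (ENNReal.ofReal (y ω))) :=
          (ENNReal.continuous_ofReal.tendsto _).comp hωy
        rw [hB, Set.mem_setOf_eq, hlim.limsup_eq]
        exact (ENNReal.ofReal_lt_ofReal_iff hq').2 h.2
    -- it suffices to show Qtilde (A ∩ B) = 0
    suffices hAB : Qtilde (A ∩ B) = 0 by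
      have : ∀ᵐ ω ∂Qtilde, ω ∉ A ∩ B :=
        measure_eq_zero_iff_ae_notMem.mp hAB
      filter_upwards [hsub, this] with ω h1 h2 h3
      exact h2 (h1 h3)
    -- three families of sets
    set D1 : ℕ → Set Ω := fun T => A ∩ {ω | Y T ω ≤ q ^ T} with hD1
    set D2 : ℕ → Set Ω := fun T => B ∩ {ω | q' ^ T ≤ Z T ω} with hD2
    set C : ℕ → Set Ω := fun T => B ∩ {ω | Z T ω < q' ^ T} with hCdef
    set D3 : ℕ → Set Ω := fun T => C T ∩ {ω | q ^ T < Y T ω} with hD3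
    have hC_measFs : ∀ T, MeasurableSet[Fs] (C T) := fun T =>
      hB_measFs.inter (measurableSet_lt (hZmeas T) measurable_const)
    have hC_meas : ∀ T, MeasurableSet (C T) := fun T => hFs _ (hC_measFs T)
    have hD1_meas : ∀ T, MeasurableSet (D1 T) := fun T =>
      hA_meas.inter (measurableSet_le (hYmeasF T) measurable_const)
    have hD2_meas : ∀ T, MeasurableSet (D2 T) := fun T =>
      hB_meas.inter (hFs _ (measurableSet_le measurable_const (hZmeas T)))
    -- inclusion
    have hincl : ∀ T, A ∩ B ⊆ D1 T ∪ D2 T ∪ D3 T := by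
      intro T ω hω
      rcases le_or_gt (Y T ω) (q ^ T) with hY | hY
      · exact Or.inl (Or.inl ⟨hω.1, hY⟩)
      rcases lt_or_ge (Z T ω) (q' ^ T) with hZ | hZ
      · exact Or.inr ⟨⟨hω.2, hZ⟩, hY⟩
      · exact Or.inl (Or.inr ⟨hω.2, hZ⟩)
    -- D1 and D2 tend to zero in measure
    have h1 : Tendsto (fun T => Qtilde (D1 T)) atTop (𝓝 0) := by
      have := tendsto_measure_of_ae_tendsto_indicator_of_isFiniteMeasure
        (μ := Qtilde) (L := atTop) (A := (∅ : Set Ω)) MeasurableSet.empty hD1_meas ?_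
      · simpa using this
      · refine Eventually.of_forall fun ω => ?_
        rcases Classical.em (ω ∈ A) with hωA | hωA
        · filter_upwards [hAev ω hωA] with T hT
          simp only [Set.mem_empty_iff_false, iff_false]
          exact fun hc => absurd hc.2 (not_le.2 hT)
        · refine Eventually.of_forall fun T => ?_
          simp only [Set.mem_empty_iff_false, iff_false]
          exact fun hc => hωA hc.1
    have h2 : Tendsto (fun T => Qtilde (D2 T)) atTop (𝓝 0) := by
      have := tendsto_measure_of_ae_tendsto_indicator_of_isFiniteMeasure
        (μ := Qtilde) (L := atTop) (A := (∅ : Set Ω)) MeasurableSet.empty hD2_meas ?_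
      · simpa using this
      · refine Eventually.of_forall fun ω => ?_
        rcases Classical.em (ω ∈ B) with hωB | hωB
        · filter_upwards [hBev ω hωB] with T hT
          simp only [Set.mem_empty_iff_false, iff_false]
          exact fun hc => absurd hc.2 (not_le.2 hT)
        · refine Eventually.of_forall fun T => ?_
          simp only [Set.mem_empty_iff_false, iff_false]
          exact fun hc => hωB hc.1
    -- Markov bound for D3
    have h3 : ∀ T, Qtilde (D3 T) ≤ ENNReal.ofReal ((q' / q) ^ T) := by
      intro T
      have hqT : (0 : ℝ) < q ^ T := pow_pos hq T
      have hq'T : (0 : ℝ) < q' ^ T := pow_pos hq' T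
      -- Markov inequality on the restricted measure
      have markov := mul_meas_ge_le_lintegral₀ (μ := Qtilde.restrict (C T))
        (f := fun ω => ENNReal.ofReal (Y T ω))
        ((hYmeasF T).ennreal_ofReal.aemeasurable) (ENNReal.ofReal (q ^ T))
      have hset : Qtilde (D3 T) ≤
          (Qtilde.restrict (C T)) {ω | ENNReal.ofReal (q ^ T) ≤ ENNReal.ofReal (Y T ω)} := by
        rw [Measure.restrict_apply₀]
        · refine measure_mono fun ω hω => ⟨ENNReal.ofReal_le_ofReal hω.2.le, hω.1⟩
        · exact (measurableSet_le measurable_const ((hYmeasF T).ennreal_ofReal)).nullMeasurableSet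
      have hlint : ∫⁻ ω, ENNReal.ofReal (Y T ω) ∂(Qtilde.restrict (C T)) =
          ENNReal.ofReal (∫ ω in C T, Y T ω ∂Qtilde) := by
        rw [ofReal_integral_eq_lintegral_ofReal ((hYint T).integrableOn)
          (Eventually.of_forall fun ω => hYnonneg T ω)]
      have hcond : ∫ ω in C T, Y T ω ∂Qtilde = ∫ ω in C T, Z T ω ∂Qtilde :=
        (setIntegral_condExp hFs (hYint T) (hC_measFs T)).symm
      have hZbound : ∫ ω in C T, Z T ω ∂Qtilde ≤ q' ^ T := by
        calc ∫ ω in C T, Z T ω ∂Qtilde ≤ ∫ _ω in C T, q' ^ T ∂Qtilde := by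
              refine setIntegral_mono_on ((hZint T).integrableOn)
                (integrableOn_const) (hC_meas T)
                fun ω hω => hω.2.le
          _ = (Qtilde (C T)).toReal * q' ^ T := by
              rw [setIntegral_const, smul_eq_mul, Measure.real]
          _ ≤ 1 * q' ^ T := by
              refine mul_le_mul_of_nonneg_right ?_ hq'T.le
              have h1' : Qtilde (C T) ≤ 1 := prob_le_one
              exact ENNReal.toReal_le_of_le_ofReal zero_le_one (by simpa using h1')
          _ = q' ^ T := one_mul _
      have hmain : ENNReal.ofReal (q ^ T) * Qtilde (D3 T) ≤ ENNReal.ofReal (q' ^ T) := by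
        calc ENNReal.ofReal (q ^ T) * Qtilde (D3 T)
            ≤ ENNReal.ofReal (q ^ T) *
              (Qtilde.restrict (C T)) {ω | ENNReal.ofReal (q ^ T) ≤ ENNReal.ofReal (Y T ω)} :=
              mul_le_mul_right hset _
          _ ≤ ∫⁻ ω, ENNReal.ofReal (Y T ω) ∂(Qtilde.restrict (C T)) := markov
          _ = ENNReal.ofReal (∫ ω in C T, Y T ω ∂Qtilde) := hlint
          _ ≤ ENNReal.ofReal (q' ^ T) := by
              rw [hcond]
              exact ENNReal.ofReal_le_ofReal hZbound
      have hne0 : ENNReal.ofReal (q ^ T) ≠ 0 := by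
        simp [ENNReal.ofReal_eq_zero, not_le, hqT]
      have hneT : ENNReal.ofReal (q ^ T) ≠ ⊤ := ENNReal.ofReal_ne_top
      have hmain' : Qtilde (D3 T) * ENNReal.ofReal (q ^ T) ≤ ENNReal.ofReal (q' ^ T) := by
        rw [mul_comm]; exact hmain
      have := (ENNReal.le_div_iff_mul_le (Or.inl hne0) (Or.inl hneT)).2 hmain'
      calc Qtilde (D3 T) ≤ ENNReal.ofReal (q' ^ T) / ENNReal.ofReal (q ^ T) := this
        _ = ENNReal.ofReal ((q' / q) ^ T) := by
            rw [← ENNReal.ofReal_div_of_pos hqT, div_pow]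
    -- combine
    have h3' : Tendsto (fun T => ENNReal.ofReal ((q' / q) ^ T)) atTop (𝓝 0) := by
      have hlt : q' / q < 1 := (div_lt_one hq).2 hqq
      have hpos : (0 : ℝ) ≤ q' / q := div_nonneg hq'.le hq.le
      have := tendsto_pow_atTop_nhds_zero_of_lt_one hpos hlt
      have := (ENNReal.continuous_ofReal.tendsto 0).comp this
      simpa [Function.comp_def] using this
    have hbound : ∀ T, Qtilde (A ∩ B) ≤ Qtilde (D1 T) + Qtilde (D2 T) +
        ENNReal.ofReal ((q' / q) ^ T) := by
      intro T
      calc Qtilde (A ∩ B) ≤ Qtilde (D1 T ∪ D2 T ∪ D3 T) := measure_mono (hincl T)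
        _ ≤ Qtilde (D1 T ∪ D2 T) + Qtilde (D3 T) := measure_union_le _ _
        _ ≤ Qtilde (D1 T) + Qtilde (D2 T) + Qtilde (D3 T) :=
            add_le_add_left (measure_union_le _ _) _
        _ ≤ Qtilde (D1 T) + Qtilde (D2 T) + ENNReal.ofReal ((q' / q) ^ T) :=
            add_le_add le_rfl (h3 T)
    have hlim : Tendsto (fun T => Qtilde (D1 T) + Qtilde (D2 T) +
        ENNReal.ofReal ((q' / q) ^ T)) atTop (𝓝 0) := by
      have := (h1.add h2).add h3'
      simpa using this
    exact le_antisymm (ge_of_tendsto' hlim hbound) (zero_le)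
  -- combine over rationals
  have keyQ : ∀ᵐ ω ∂Qtilde, ∀ q' q : ℚ, 0 < (q' : ℝ) → (q' : ℝ) < q →
      ¬ (q < x ω ∧ y ω < q') := by
    rw [MeasureTheory.ae_all_iff]
    intro q'
    rw [MeasureTheory.ae_all_iff]
    intro q
    rcases Classical.em (0 < (q' : ℝ) ∧ (q' : ℝ) < q) with h | h
    · filter_upwards [key q' q h.1 h.2] with ω hω _ _
      exact hω
    · exact Eventually.of_forall fun ω h1 h2 => absurd ⟨h1, h2⟩ h
  filter_upwards [keyQ, hynn] with ω hω hyn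
  by_contra hc
  push_neg at hc
  obtain ⟨q', hq'1, hq'2⟩ := exists_rat_btwn hc
  obtain ⟨q, hq1, hq2⟩ := exists_rat_btwn hq'2
  exact hω q' q (lt_of_le_of_lt hyn hq'1) hq1 ⟨hq2, hq'1⟩
end

section
/- In the Poisson short-rate model r_t = r_0 + δ N_t with N a Poisson process of intensity λ and δ > 0, the bond prices P(t,T) = E[exp(−∫_t^T r_u du) | F_t] satisfy z(t,T) = r_t + λ − (λ/(δ(T−t)))(1 − e^{−δ(T−t)}), where z(t,T) = −(1/(T−t)) log P(t,T). -/
/-!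
On `[t, T]` write `r_u = r_t + δ (N_u - N_t)`. The discount factor splits into the
`ℱ_t`-measurable factor `exp (-r_t (T - t))` times `exp (-δ ∫_t^T (N_u - N_t) du)`, so everything
reduces to the conditional Laplace transform of `∫_t^T (N_u - N_t) du`. Replace the integral by
a left Riemann sum over `n` equal steps of length `Δ` and sum by parts: the sum becomes
`Δ ∑_j (n - 1 - j) (N_{x_{j+1}} - N_{x_j})`, a combination of increments that are independent of
`ℱ_t` and of each other, each Poisson with mean `λ Δ`. Hence its conditional Laplace transform is
`exp (λ ∑_k Δ (e^{-δ Δ k} - 1))`, a Riemann sum for `λ ∫_0^{T-t} (e^{-δ u} - 1) du`. Dominated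
convergence passes to the limit, and taking logarithms gives the yield.
-/

open MeasureTheory ProbabilityTheory Filter Topology
open scoped NNReal

theorem MonotoneOn.tendsto_riemannSum {f : ℝ → ℝ} {a b : ℝ} (hab : a ≤ b)
    (hf : MonotoneOn f (Set.Icc a b)) :
    Tendsto (fun n : ℕ => (b - a) / n * ∑ i ∈ Finset.range n, f (a + (b - a) / n * i))
      atTop (𝓝 (∫ x in a..b, f x)) := by
  rcases hab.eq_or_lt with rfl | hab
  · simp
  set L : ℕ → ℝ := fun n => (b - a) / n * ∑ i ∈ Finset.range n, f (a + (b - a) / n * i)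
  have bounds : ∀ n : ℕ, 0 < n →
      L n ≤ ∫ x in a..b, f x ∧ ∫ x in a..b, f x ≤ L n + (f b - f a) * (b - a) / n := by
    intro n hn
    set Δ := (b - a) / n with hΔ
    have hΔpos : 0 < Δ := div_pos (sub_pos.2 hab) (Nat.cast_pos.2 hn)
    have hΔn : a + Δ * n = b := by rw [hΔ]; field_simp; ring
    have hmono : MonotoneOn (fun s => f (a + Δ * s)) (Set.Icc 0 (0 + n)) := by
      intro x hx y hy hxy
      refine hf ⟨?_, ?_⟩ ⟨?_, ?_⟩ (by gcongr) <;> nlinarith [hx.1, hx.2, hy.1, hy.2]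
    have hscale : ∫ s in (0 : ℝ)..n, f (a + Δ * s) = Δ⁻¹ * ∫ x in a..b, f x := by
      rw [intervalIntegral.integral_comp_add_mul _ hΔpos.ne', mul_zero, add_zero, hΔn,
        smul_eq_mul]
    have hlow := hmono.sum_le_integral
    have hhigh := hmono.integral_le_sum
    have htel : ∑ i ∈ Finset.range n, f (a + Δ * ↑(i + 1))
        = ∑ i ∈ Finset.range n, f (a + Δ * i) + (f b - f a) := by
      have h := (Finset.sum_range_succ (fun i : ℕ => f (a + Δ * i)) n).symm.trans
        (Finset.sum_range_succ' (fun i : ℕ => f (a + Δ * i)) n)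
      push_cast at h ⊢
      rw [hΔn, mul_zero, add_zero] at h
      linarith
    simp only [zero_add] at hlow hhigh
    rw [hscale, le_inv_mul_iff₀ hΔpos] at hlow
    rw [hscale, htel, inv_mul_le_iff₀ hΔpos] at hhigh
    refine ⟨hlow, ?_⟩
    rw [mul_div_assoc, mul_comm (f b - f a)]
    linarith
  have herr : Tendsto (fun n : ℕ => (f b - f a) * (b - a) / n) atTop (𝓝 0) :=
    tendsto_const_div_atTop_nhds_zero_nat _
  refine tendsto_of_tendsto_of_tendsto_of_le_of_le' (by simpa using tendsto_const_nhds.sub herr)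
    tendsto_const_nhds ?_ ?_
  · filter_upwards [eventually_gt_atTop 0] with n hn
    linarith [(bounds n hn).2]
  · filter_upwards [eventually_gt_atTop 0] with n hn
    exact (bounds n hn).1

theorem AntitoneOn.tendsto_riemannSum {f : ℝ → ℝ} {a b : ℝ} (hab : a ≤ b)
    (hf : AntitoneOn f (Set.Icc a b)) :
    Tendsto (fun n : ℕ => (b - a) / n * ∑ i ∈ Finset.range n, f (a + (b - a) / n * i))
      atTop (𝓝 (∫ x in a..b, f x)) := by
  simpa [intervalIntegral.integral_neg] using (hf.neg.tendsto_riemannSum hab).neg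

theorem Finset.sum_range_sub_eq_sum_nsmul {M : Type*} [AddCommGroup M] (f : ℕ → M) (n : ℕ) :
    ∑ i ∈ range n, (f i - f 0) = ∑ j ∈ range n, (n - 1 - j) • (f (j + 1) - f j) := by
  have h := Finset.sum_Ico_Ico_comm' 0 n fun j _ => f (j + 1) - f j
  simp only [← Finset.range_eq_Ico, Finset.sum_range_sub, Finset.sum_const, Nat.card_Ico] at h
  rw [← h]
  refine Finset.sum_congr rfl fun j _ => ?_
  congr 1
  omega

theorem integral_exp_mul_poissonMeasure (r : ℝ≥0) (s : ℝ) :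
    ∫ k : ℕ, Real.exp (s * k) ∂poissonMeasure r = Real.exp (r * (Real.exp s - 1)) := by
  rw [integral_poissonMeasure]
  calc ∑' k : ℕ, (Real.exp (-r) * r ^ k / k.factorial) • Real.exp (s * k)
      = ∑' k : ℕ, Real.exp (-r) * ((r * Real.exp s) ^ k / k.factorial) := by
        congr with k
        rw [smul_eq_mul, mul_pow, ← Real.exp_nat_mul]
        ring_nf
    _ = Real.exp (-r) * Real.exp (r * Real.exp s) := by
        rw [tsum_mul_left, Real.exp_eq_exp_ℝ, (NormedSpace.expSeries_div_hasSum_exp _).tsum_eq]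
    _ = Real.exp (r * (Real.exp s - 1)) := by
        rw [← Real.exp_add]; ring_nf

theorem setIntegral_prod_eq_of_indep {Ω : Type*} {m : MeasurableSpace Ω} {μ : Measure Ω}
    {G : ℕ → MeasurableSpace Ω} (hG : Monotone G) (hGm : ∀ j, G j ≤ m) {φ : ℕ → Ω → ℝ}
    (hφ : ∀ j, Measurable[G (j + 1)] (φ j))
    (hindep : ∀ j, Indep (MeasurableSpace.comap (φ j) inferInstance) (G j) μ)
    {s : Set Ω} (hs : MeasurableSet[G 0] s) (n : ℕ) :
    ∫ ω in s, ∏ j ∈ Finset.range n, φ j ω ∂μ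
      = μ.real s * ∏ j ∈ Finset.range n, ∫ ω, φ j ω ∂μ := by
  induction n with
  | zero => simp
  | succ n ih =>
    set W : Ω → ℝ := s.indicator fun ω => ∏ j ∈ Finset.range n, φ j ω
    have hW : Measurable[G n] W := by
      refine Measurable.indicator (Finset.measurable_prod _ fun j hj => ?_)
        (hG (Nat.zero_le n) _ hs)
      exact (hφ j).mono (hG (Finset.mem_range.1 hj)) le_rfl
    have hWφ : IndepFun W (φ n) μ := by
      rw [IndepFun_iff_Indep]
      exact (indep_of_indep_of_le_right (hindep n) hW.comap_le).symm
    calc ∫ ω in s, ∏ j ∈ Finset.range (n + 1), φ j ω ∂μ = ∫ ω, (W * φ n) ω ∂μ := by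
          rw [← integral_indicator ((hGm 0) s hs)]
          congr with ω
          by_cases hω : ω ∈ s <;> simp [W, hω, Finset.prod_range_succ]
      _ = (∫ ω in s, ∏ j ∈ Finset.range n, φ j ω ∂μ) * ∫ ω, φ n ω ∂μ := by
          rw [hWφ.integral_mul_eq_mul_integral ((hW.mono (hGm n) le_rfl).aestronglyMeasurable)
            ((hφ n).mono (hGm _) le_rfl).aestronglyMeasurable, integral_indicator ((hGm 0) s hs)]
      _ = μ.real s * ∏ j ∈ Finset.range (n + 1), ∫ ω, φ j ω ∂μ := by
          rw [ih, Finset.prod_range_succ, mul_assoc]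

theorem intervalIntegral.integral_const_add_mul_eq {f : ℝ → ℝ} {a b : ℝ}
    (hf : IntervalIntegrable f volume a b) (c d : ℝ) :
    ∫ u in a..b, (c + d * f u) = (c + d * f a) * (b - a) + d * ∫ u in a..b, (f u - f a) := by
  rw [intervalIntegral.integral_add intervalIntegrable_const (hf.const_mul d),
    intervalIntegral.integral_const_mul, intervalIntegral.integral_sub hf intervalIntegrable_const,
    intervalIntegral.integral_const, intervalIntegral.integral_const, smul_eq_mul, smul_eq_mul]
  ring

theorem integral_exp_neg_mul {δ : ℝ} (hδ : δ ≠ 0) (τ : ℝ) :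
    ∫ u in (0 : ℝ)..τ, Real.exp (-(δ * u)) = (1 - Real.exp (-(δ * τ))) / δ := by
  rw [intervalIntegral.integral_comp_mul_left (fun y => Real.exp (-y)) hδ,
    intervalIntegral.integral_comp_neg (fun y => Real.exp y), integral_exp, mul_zero, neg_zero,
    Real.exp_zero, smul_eq_mul, inv_mul_eq_div]

theorem tendsto_riemannSum_exp_neg_mul {δ τ : ℝ} (hδ : 0 < δ) (hτ : 0 ≤ τ) :
    Tendsto (fun n : ℕ => τ / n * ∑ k ∈ Finset.range n, Real.exp (-(δ * (τ / n * k))))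
      atTop (𝓝 ((1 - Real.exp (-(δ * τ))) / δ)) := by
  have hanti : AntitoneOn (fun u => Real.exp (-(δ * u))) (Set.Icc 0 τ) :=
    fun u _ v _ huv => Real.exp_le_exp.2 (by nlinarith)
  simpa [integral_exp_neg_mul hδ.ne'] using hanti.tendsto_riemannSum hτ

structure HasIndepPoissonIncrements {Ω : Type*} {m : MeasurableSpace Ω} (N : ℝ → Ω → ℕ)
    (lam : ℝ≥0) (ℱ : Filtration ℝ m) (μ : Measure Ω) : Prop where
  adapted : ∀ u, Measurable[ℱ u] (N u)
  monotone : ∀ ω, Monotone fun u => N u ω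
  map_sub : ∀ u v : ℝ, 0 ≤ u → u ≤ v →
    μ.map (fun ω => N v ω - N u ω) = poissonMeasure (lam * Real.toNNReal (v - u))
  indep_sub : ∀ u v : ℝ, 0 ≤ u → u ≤ v →
    Indep (MeasurableSpace.comap (fun ω => N v ω - N u ω) inferInstance) (ℱ u) μ

namespace HasIndepPoissonIncrements

variable {Ω : Type*} {m : MeasurableSpace Ω} {N : ℝ → Ω → ℕ} {lam : ℝ≥0} {ℱ : Filtration ℝ m}
  {μ : Measure Ω}

theorem measurable (hN : HasIndepPoissonIncrements N lam ℱ μ) (u : ℝ) : Measurable (N u) :=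
  (hN.adapted u).mono (ℱ.le u) le_rfl

theorem cast_sub (hN : HasIndepPoissonIncrements N lam ℱ μ) {u v : ℝ} (huv : u ≤ v) (ω : Ω) :
    ((N v ω - N u ω : ℕ) : ℝ) = N v ω - N u ω :=
  Nat.cast_sub (hN.monotone ω huv)

theorem integral_exp_mul_sub (hN : HasIndepPoissonIncrements N lam ℱ μ) {u v : ℝ} (hu : 0 ≤ u)
    (huv : u ≤ v) (c : ℝ) :
    ∫ ω, Real.exp (c * ((N v ω : ℝ) - N u ω)) ∂μ
      = Real.exp (lam * (v - u) * (Real.exp c - 1)) := by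
  have hmeas : AEMeasurable (fun ω => N v ω - N u ω) μ :=
    ((hN.measurable v).sub (hN.measurable u)).aemeasurable
  simp_rw [← hN.cast_sub huv]
  rw [← integral_map (f := fun k : ℕ => Real.exp (c * k)) hmeas .of_discrete,
    hN.map_sub u v hu huv, integral_exp_mul_poissonMeasure, NNReal.coe_mul,
    Real.coe_toNNReal _ (sub_nonneg.2 huv)]

theorem setIntegral_prod_exp_mul_sub (hN : HasIndepPoissonIncrements N lam ℱ μ) {x : ℕ → ℝ}
    (hx : Monotone x) (hx0 : 0 ≤ x 0) (c : ℕ → ℝ) {s : Set Ω} (hs : MeasurableSet[ℱ (x 0)] s)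
    (n : ℕ) :
    ∫ ω in s, ∏ j ∈ Finset.range n, Real.exp (c j * ((N (x (j + 1)) ω : ℝ) - N (x j) ω)) ∂μ
      = μ.real s * ∏ j ∈ Finset.range n,
          Real.exp (lam * (x (j + 1) - x j) * (Real.exp (c j) - 1)) := by
  have hxj : ∀ j, 0 ≤ x j := fun j => hx0.trans (hx (Nat.zero_le j))
  have hstep : ∀ j, x j ≤ x (j + 1) := fun j => hx (Nat.le_succ j)
  rw [setIntegral_prod_eq_of_indep (G := fun j => ℱ (x j)) (fun _ _ hij => ℱ.mono (hx hij))
    (fun j => ℱ.le _) ?measurable ?indep hs n]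
  · simp_rw [hN.integral_exp_mul_sub (hxj _) (hstep _)]
  case measurable =>
    intro j
    refine Real.measurable_exp.comp (Measurable.const_mul ?_ _)
    exact (measurable_from_nat.comp (hN.adapted _)).sub
      (measurable_from_nat.comp ((hN.adapted _).mono (ℱ.mono (hstep j)) le_rfl))
  case indep =>
    intro j
    refine indep_of_indep_of_le_left (hN.indep_sub _ _ (hxj j) (hstep j)) ?_
    refine Measurable.comap_le ?_
    have hφ : (fun ω => Real.exp (c j * ((N (x (j + 1)) ω : ℝ) - N (x j) ω)))
        = (fun k : ℕ => Real.exp (c j * k)) ∘ fun ω => N (x (j + 1)) ω - N (x j) ω := by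
      funext ω
      simp [hN.cast_sub (hstep j)]
    rw [hφ]
    exact measurable_from_nat.comp (comap_measurable _)

theorem tendsto_riemannSum_sub (hN : HasIndepPoissonIncrements N lam ℱ μ) {t T : ℝ} (htT : t ≤ T)
    (ω : Ω) :
    Tendsto (fun n : ℕ => (T - t) / n
        * ∑ i ∈ Finset.range n, ((N (t + (T - t) / n * i) ω : ℝ) - N t ω))
      atTop (𝓝 (∫ u in t..T, ((N u ω : ℝ) - N t ω))) :=
  MonotoneOn.tendsto_riemannSum htT fun _ _ _ _ huv =>
    sub_le_sub_right (Nat.cast_le.2 (hN.monotone ω huv)) _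

theorem measurable_integral_sub (hN : HasIndepPoissonIncrements N lam ℱ μ) {t T : ℝ}
    (htT : t ≤ T) : Measurable fun ω => ∫ u in t..T, ((N u ω : ℝ) - N t ω) := by
  refine measurable_of_tendsto_metrizable (fun n => ?_)
    (tendsto_pi_nhds.2 (hN.tendsto_riemannSum_sub htT))
  refine Measurable.const_mul (Finset.measurable_sum _ fun i _ => ?_) _
  exact (measurable_from_nat.comp (hN.measurable _)).sub
    (measurable_from_nat.comp (hN.measurable t))

theorem integral_sub_nonneg (hN : HasIndepPoissonIncrements N lam ℱ μ) {t T : ℝ} (htT : t ≤ T)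
    (ω : Ω) : 0 ≤ ∫ u in t..T, ((N u ω : ℝ) - N t ω) :=
  intervalIntegral.integral_nonneg htT fun _ hu =>
    sub_nonneg.2 (Nat.cast_le.2 (hN.monotone ω hu.1))

theorem setIntegral_exp_neg_mul_riemannSum_sub (hN : HasIndepPoissonIncrements N lam ℱ μ)
    (δ : ℝ) {t T : ℝ} (ht : 0 ≤ t) (htT : t ≤ T) {s : Set Ω} (hs : MeasurableSet[ℱ t] s)
    {n : ℕ} (hn : n ≠ 0) :
    ∫ ω in s, Real.exp (-(δ * ((T - t) / n
        * ∑ i ∈ Finset.range n, ((N (t + (T - t) / n * i) ω : ℝ) - N t ω)))) ∂μ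
      = μ.real s * Real.exp (lam * ((T - t) / n
          * ∑ k ∈ Finset.range n, Real.exp (-(δ * ((T - t) / n * k))) - (T - t))) := by
  set Δ := (T - t) / n
  set x : ℕ → ℝ := fun i => t + Δ * i
  have hx : Monotone x := fun i j hij => by
    have : 0 ≤ Δ := div_nonneg (sub_nonneg.2 htT) n.cast_nonneg
    simp only [x]; gcongr
  have hx0 : x 0 = t := by simp [x]
  have hstep : ∀ j : ℕ, x (j + 1) - x j = Δ := fun j => by simp only [x]; push_cast; ring
  -- summation by parts turns the Riemann sum into a combination of increments over the partition
  have hprod : ∀ ω, Real.exp (-(δ * (Δ * ∑ i ∈ Finset.range n, ((N (x i) ω : ℝ) - N t ω))))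
      = ∏ j ∈ Finset.range n,
          Real.exp (-(δ * (Δ * (n - 1 - j : ℕ))) * ((N (x (j + 1)) ω : ℝ) - N (x j) ω)) := by
    intro ω
    have hsum := Finset.sum_range_sub_eq_sum_nsmul (fun i => (N (x i) ω : ℝ)) n
    rw [hx0] at hsum
    rw [hsum, ← Real.exp_sum, Finset.mul_sum, Finset.mul_sum, ← Finset.sum_neg_distrib]
    refine congrArg Real.exp (Finset.sum_congr rfl fun j _ => ?_)
    rw [nsmul_eq_mul]
    ring
  rw [integral_congr_ae (ae_of_all _ hprod),
    hN.setIntegral_prod_exp_mul_sub hx (by rwa [hx0]) _ (by rwa [hx0]) n, ← Real.exp_sum]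
  simp only [hstep]
  congr 2
  refine (Finset.sum_range_reflect
    (fun k : ℕ => (lam : ℝ) * Δ * (Real.exp (-(δ * (Δ * k))) - 1)) n).trans ?_
  have hΔn : Δ * n = T - t := div_mul_cancel₀ _ (Nat.cast_ne_zero.2 hn)
  rw [← Finset.mul_sum, Finset.sum_sub_distrib, Finset.sum_const, Finset.card_range,
    nsmul_eq_mul, ← hΔn]
  ring

theorem setIntegral_exp_neg_mul_integral_sub [IsFiniteMeasure μ]
    (hN : HasIndepPoissonIncrements N lam ℱ μ) {δ : ℝ} (hδ : 0 < δ) {t T : ℝ} (ht : 0 ≤ t)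
    (htT : t ≤ T) {s : Set Ω} (hs : MeasurableSet[ℱ t] s) :
    ∫ ω in s, Real.exp (-(δ * ∫ u in t..T, ((N u ω : ℝ) - N t ω))) ∂μ
      = μ.real s * Real.exp (lam * ((1 - Real.exp (-(δ * (T - t)))) / δ - (T - t))) := by
  set S : ℕ → Ω → ℝ := fun n ω =>
    (T - t) / n * ∑ i ∈ Finset.range n, ((N (t + (T - t) / n * i) ω : ℝ) - N t ω)
  have hS_nonneg : ∀ n ω, 0 ≤ S n ω := fun n ω =>
    have hΔ : 0 ≤ (T - t) / n := div_nonneg (sub_nonneg.2 htT) n.cast_nonneg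
    mul_nonneg hΔ (Finset.sum_nonneg fun i _ => sub_nonneg.2 (Nat.cast_le.2
      (hN.monotone ω (le_add_of_nonneg_right (mul_nonneg hΔ i.cast_nonneg)))))
  have hS_meas : ∀ n, Measurable (S n) := fun n =>
    (Finset.measurable_sum _ fun i _ => (measurable_from_nat.comp (hN.measurable _)).sub
      (measurable_from_nat.comp (hN.measurable t))).const_mul _
  have hlim_lhs : Tendsto (fun n => ∫ ω in s, Real.exp (-(δ * S n ω)) ∂μ) atTop
      (𝓝 (∫ ω in s, Real.exp (-(δ * ∫ u in t..T, ((N u ω : ℝ) - N t ω))) ∂μ)) := by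
    refine tendsto_integral_of_dominated_convergence (fun _ => 1)
      (fun n => (Real.measurable_exp.comp ((hS_meas n).const_mul δ).neg).aestronglyMeasurable)
      (integrable_const 1) (fun n => ae_of_all _ fun ω => ?_) (ae_of_all _ fun ω => ?_)
    · rw [Real.norm_of_nonneg (Real.exp_pos _).le, Real.exp_le_one_iff, neg_nonpos]
      exact mul_nonneg hδ.le (hS_nonneg n ω)
    · exact (Real.continuous_exp.tendsto _).comp
        (((hN.tendsto_riemannSum_sub htT ω).const_mul δ).neg)
  have hlim_rhs : Tendsto (fun n : ℕ => μ.real s * Real.exp (lam * ((T - t) / n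
      * ∑ k ∈ Finset.range n, Real.exp (-(δ * ((T - t) / n * k))) - (T - t)))) atTop
      (𝓝 (μ.real s * Real.exp (lam * ((1 - Real.exp (-(δ * (T - t)))) / δ - (T - t))))) :=
    ((Real.continuous_exp.tendsto _).comp (((tendsto_riemannSum_exp_neg_mul hδ
      (sub_nonneg.2 htT)).sub_const _).const_mul _)).const_mul _
  refine tendsto_nhds_unique hlim_lhs (hlim_rhs.congr' ?_)
  filter_upwards [eventually_ne_atTop 0] with n hn
  exact (hN.setIntegral_exp_neg_mul_riemannSum_sub δ ht htT hs hn).symm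

theorem integrable_exp_neg_mul_integral_sub [IsFiniteMeasure μ]
    (hN : HasIndepPoissonIncrements N lam ℱ μ) {δ : ℝ} (hδ : 0 ≤ δ) {t T : ℝ} (htT : t ≤ T) :
    Integrable (fun ω => Real.exp (-(δ * ∫ u in t..T, ((N u ω : ℝ) - N t ω)))) μ := by
  refine Integrable.of_bound (Real.measurable_exp.comp
    ((hN.measurable_integral_sub htT).const_mul δ).neg).aestronglyMeasurable 1
    (ae_of_all _ fun ω => ?_)
  rw [Real.norm_of_nonneg (Real.exp_pos _).le, Real.exp_le_one_iff, neg_nonpos]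
  exact mul_nonneg hδ (hN.integral_sub_nonneg htT ω)

theorem condExp_exp_neg_mul_integral_sub [IsFiniteMeasure μ]
    (hN : HasIndepPoissonIncrements N lam ℱ μ) {δ : ℝ} (hδ : 0 < δ) {t T : ℝ} (ht : 0 ≤ t)
    (htT : t ≤ T) :
    μ[fun ω => Real.exp (-(δ * ∫ u in t..T, ((N u ω : ℝ) - N t ω))) | ℱ t]
      =ᵐ[μ] fun _ => Real.exp (lam * ((1 - Real.exp (-(δ * (T - t)))) / δ - (T - t))) := by
  refine (ae_eq_condExp_of_forall_setIntegral_eq (ℱ.le t)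
    (hN.integrable_exp_neg_mul_integral_sub hδ.le htT) (fun _ _ _ => integrableOn_const)
    (fun s hs _ => ?_) aestronglyMeasurable_const).symm
  rw [setIntegral_const, smul_eq_mul, hN.setIntegral_exp_neg_mul_integral_sub hδ ht htT hs]

theorem condExp_exp_neg_integral_const_add_mul [IsFiniteMeasure μ]
    (hN : HasIndepPoissonIncrements N lam ℱ μ) (r₀ : ℝ) {δ : ℝ} (hδ : 0 < δ) {t T : ℝ}
    (ht : 0 ≤ t) (htT : t ≤ T) :
    μ[fun ω => Real.exp (-(∫ u in t..T, (r₀ + δ * (N u ω : ℝ)))) | ℱ t]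
      =ᵐ[μ] fun ω => Real.exp (-((r₀ + δ * N t ω) * (T - t)))
        * Real.exp (lam * ((1 - Real.exp (-(δ * (T - t)))) / δ - (T - t))) := by
  set C : Ω → ℝ := fun ω => Real.exp (-((r₀ + δ * N t ω) * (T - t)))
  set g : Ω → ℝ := fun ω => Real.exp (-(δ * ∫ u in t..T, ((N u ω : ℝ) - N t ω)))
  have hsplit : (fun ω => Real.exp (-(∫ u in t..T, (r₀ + δ * (N u ω : ℝ))))) = C * g := by
    funext ω
    have hint : IntervalIntegrable (fun u => (N u ω : ℝ)) volume t T :=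
      (Nat.mono_cast.comp (hN.monotone ω)).intervalIntegrable
    rw [intervalIntegral.integral_const_add_mul_eq hint, Pi.mul_apply, ← Real.exp_add]
    ring_nf
  have hC : StronglyMeasurable[ℱ t] C :=
    (Real.measurable_exp.comp (((measurable_from_nat.comp (hN.adapted t)).const_mul δ).const_add
      r₀ |>.mul_const _).neg).stronglyMeasurable
  have hC_bound : ∀ ω, ‖C ω‖ ≤ Real.exp (-(r₀ * (T - t))) := fun ω => by
    rw [Real.norm_of_nonneg (Real.exp_pos _).le, Real.exp_le_exp]
    nlinarith [mul_nonneg (mul_nonneg hδ.le (N t ω).cast_nonneg) (sub_nonneg.2 htT)]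
  have hg := hN.integrable_exp_neg_mul_integral_sub hδ.le htT
  rw [hsplit]
  filter_upwards [condExp_mul_of_stronglyMeasurable_left hC
    (hg.bdd_mul (hC.mono (ℱ.le t)).aestronglyMeasurable (ae_of_all _ hC_bound)) hg,
    hN.condExp_exp_neg_mul_integral_sub hδ ht htT] with ω hCg hg_cond
  rw [hCg, Pi.mul_apply, hg_cond]

end HasIndepPoissonIncrements

theorem poisson_model_yield_formula_general
    {Ω : Type*} {F : MeasurableSpace Ω} (μ : Measure Ω) [IsProbabilityMeasure μ]
    (ℱ : ℝ → MeasurableSpace Ω) (hℱ_mono : Monotone ℱ) (hℱ_le : ∀ u, ℱ u ≤ F)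
    (N : ℝ → Ω → ℕ) (lam : ℝ≥0) (δ : ℝ) (hδ : 0 < δ) (r₀ : ℝ)
    (hNadapted : ∀ u, Measurable[ℱ u] (N u))
    (hNmono : ∀ ω, Monotone fun u => N u ω)
    (hNdist : ∀ u v : ℝ, 0 ≤ u → u ≤ v →
      Measure.map (fun ω => N v ω - N u ω) μ = poissonMeasure (lam * Real.toNNReal (v - u)))
    (hNindep : ∀ u v : ℝ, 0 ≤ u → u ≤ v →
      Indep (MeasurableSpace.comap (fun ω => N v ω - N u ω) inferInstance) (ℱ u) μ)
    (P : ℝ → ℝ → Ω → ℝ)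
    (hP : ∀ t T : ℝ, 0 ≤ t → t ≤ T →
      P t T =ᵐ[μ]
        μ[fun ω => Real.exp (-(∫ u in t..T, (r₀ + δ * (N u ω : ℝ)))) | ℱ t])
    (t T : ℝ) (ht : 0 ≤ t) (htT : t < T) :
    ∀ᵐ ω ∂μ, -(1 / (T - t)) * Real.log (P t T ω)
      = r₀ + δ * (N t ω : ℝ) + (lam : ℝ)
        - ((lam : ℝ) / (δ * (T - t))) * (1 - Real.exp (-(δ * (T - t)))) := by
  have hN : HasIndepPoissonIncrements N lam ⟨ℱ, hℱ_mono, hℱ_le⟩ μ :=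
    ⟨hNadapted, hNmono, hNdist, hNindep⟩
  filter_upwards [(hP t T ht htT.le).trans
    (hN.condExp_exp_neg_integral_const_add_mul r₀ hδ ht htT.le)] with ω hω
  rw [hω, ← Real.exp_add, Real.log_exp]
  have hτ : T - t ≠ 0 := (sub_pos.2 htT).ne'
  field_simp
  ring

theorem poisson_model_yield_formula
    {Ω : Type*} {F : MeasurableSpace Ω} (μ : Measure Ω) [IsProbabilityMeasure μ]
    (ℱ : ℝ → MeasurableSpace Ω) (hℱ_mono : Monotone ℱ) (hℱ_le : ∀ u, ℱ u ≤ F)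
    (N : ℝ → Ω → ℕ) (lam : ℝ≥0) (hlam : 0 < lam) (δ : ℝ) (hδ : 0 < δ) (r₀ : ℝ)
    (hN0 : ∀ ω, N 0 ω = 0)
    (hNmeas : Measurable fun p : ℝ × Ω => N p.1 p.2)
    (hNadapted : ∀ u, Measurable[ℱ u] (N u))
    (hNmono : ∀ ω, Monotone fun u => N u ω)
    (hNdist : ∀ u v : ℝ, 0 ≤ u → u ≤ v →
      Measure.map (fun ω => N v ω - N u ω) μ = poissonMeasure (lam * Real.toNNReal (v - u)))
    (hNindep : ∀ u v : ℝ, 0 ≤ u → u ≤ v →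
      Indep (MeasurableSpace.comap (fun ω => N v ω - N u ω) inferInstance) (ℱ u) μ)
    (P : ℝ → ℝ → Ω → ℝ)
    (hP : ∀ t T : ℝ, 0 ≤ t → t ≤ T →
      P t T =ᵐ[μ]
        μ[fun ω => Real.exp (-(∫ u in t..T, (r₀ + δ * (N u ω : ℝ)))) | ℱ t])
    (t T : ℝ) (ht : 0 ≤ t) (htT : t < T) :
    ∀ᵐ ω ∂μ, -(1 / (T - t)) * Real.log (P t T ω)
      = r₀ + δ * (N t ω : ℝ) + (lam : ℝ)
        - ((lam : ℝ) / (δ * (T - t))) * (1 - Real.exp (-(δ * (T - t)))) :=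
  poisson_model_yield_formula_general μ ℱ hℱ_mono hℱ_le N lam δ hδ r₀ hNadapted hNmono hNdist
    hNindep P hP t T ht htT
end

section
/- For a Poisson process N with intensity λ and δ > 0, E[exp(−δ ∫_0^h N_u du)] = exp(−λh + (λ/δ)(1 − e^{−δh})) for all h ≥ 0. -/
open MeasureTheory ProbabilityTheory Filter Topology
open scoped NNReal
open Finset

lemma aux_poisson_exp (r : ℝ≥0) (θ : ℝ) (hθ : θ ≤ 0) :
    ∫ k : ℕ, Real.exp (θ * k) ∂(poissonMeasure r) = Real.exp (r * (Real.exp θ - 1)) := by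
  have hmeas : Measurable fun k : ℕ => Real.exp (θ * k) := measurable_from_top
  have hbdd : ∀ k : ℕ, ‖Real.exp (θ * k)‖ ≤ 1 := by
    intro k
    rw [Real.norm_eq_abs, abs_of_pos (Real.exp_pos _)]
    exact Real.exp_le_one_iff.mpr (mul_nonpos_of_nonpos_of_nonneg hθ (Nat.cast_nonneg k))
  have hint : Integrable (fun k : ℕ => Real.exp (θ * k)) (poissonMeasure r) :=
    (integrable_const (1:ℝ)).mono' hmeas.aestronglyMeasurable (Filter.Eventually.of_forall hbdd)
  rw [integral_poissonMeasure' hint]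
  have hterm : ∀ k : ℕ, (Real.exp (-(r:ℝ)) * (r:ℝ) ^ k / (Nat.factorial k)) • Real.exp (θ * k)
      = Real.exp (-(r:ℝ)) * ((r * Real.exp θ) ^ k / (Nat.factorial k)) := by
    intro k
    rw [smul_eq_mul, mul_pow, ← Real.exp_nat_mul]
    ring
  simp_rw [hterm]
  have hsum : HasSum (fun k : ℕ => (r * Real.exp θ) ^ k / (Nat.factorial k))
      (Real.exp (r * Real.exp θ)) := by
    rw [Real.exp_eq_exp_ℝ]
    exact NormedSpace.expSeries_div_hasSum_exp _
  rw [(hsum.mul_left (Real.exp (-(r:ℝ)))).tsum_eq, ← Real.exp_add]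
  ring_nf

lemma aux_abel (a : ℕ → ℝ) : ∀ m : ℕ,
    ∑ i ∈ range m, ((m:ℝ) - i) * (a (i+1) - a i)
      = (∑ i ∈ range (m+1), a i) - (m+1) * a 0 := by
  intro m
  induction m with
  | zero => simp
  | succ m ih =>
    have key : ∑ i ∈ range (m+1), (((m:ℝ)+1) - i) * (a (i+1) - a i)
        = (∑ i ∈ range (m+1), ((m:ℝ) - i) * (a (i+1) - a i))
          + ∑ i ∈ range (m+1), (a (i+1) - a i) := by
      rw [← Finset.sum_add_distrib]
      apply Finset.sum_congr rfl
      intro i _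
      ring
    have tel : ∑ i ∈ range (m+1), (a (i+1) - a i) = a (m+1) - a 0 :=
      Finset.sum_range_sub a (m+1)
    have last : ∑ i ∈ range (m+1), ((m:ℝ) - i) * (a (i+1) - a i)
        = ∑ i ∈ range m, ((m:ℝ) - i) * (a (i+1) - a i) := by
      rw [Finset.sum_range_succ]
      simp
    push_cast
    rw [key, tel, last, ih, Finset.sum_range_succ (f := a) (n := m+1)]
    push_cast
    ring

lemma aux_reindex (φ : ℕ → ℝ) (hφ : φ 0 = 0) (m : ℕ) :
    ∑ i ∈ range m, φ (m - i) = ∑ k ∈ range (m+1), φ k := by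
  have h1 : ∑ i ∈ range m, φ (m - i) = ∑ i ∈ range m, φ (i + 1) := by
    rw [← Finset.sum_range_reflect]
    apply Finset.sum_congr rfl
    intro j hj
    rw [Finset.mem_range] at hj
    congr 1
    omega
  rw [h1, Finset.sum_range_succ' φ m, hφ, add_zero]

lemma aux_riemann {g : ℝ → ℝ} (hg : Monotone g) {h : ℝ} (hh : 0 < h) :
    Tendsto (fun n : ℕ => (h / n) * ∑ i ∈ range n, g (i * (h / n))) atTop
      (𝓝 (∫ u in (0:ℝ)..h, g u)) := by
  set I := ∫ u in (0:ℝ)..h, g u with hI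
  have hint : ∀ a b : ℝ, IntervalIntegrable g volume a b := fun a b => hg.intervalIntegrable
  have key : ∀ n : ℕ, 1 ≤ n →
      I - (h / n) * (g h - g 0) ≤ (h / n) * ∑ i ∈ range n, g (i * (h / n))
      ∧ (h / n) * ∑ i ∈ range n, g (i * (h / n)) ≤ I := by
    intro n hn
    have hn0 : (0:ℝ) < n := by exact_mod_cast hn
    have hc : 0 < h / n := div_pos hh hn0
    set c := h / n with hcdef
    have hnc : h = (n:ℝ) * c := by rw [hcdef]; field_simp
    have hsplit : I = ∑ i ∈ range n, ∫ u in ((i:ℝ)*c)..(((i:ℝ)+1)*c), g u := by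
      have this := intervalIntegral.sum_integral_adjacent_intervals
        (a := fun i : ℕ => (i:ℝ) * c) (n := n) (f := g) (fun k _ => hint _ _)
      simp only [Nat.cast_zero, zero_mul] at this
      push_cast at this
      rw [hI, hnc]
      exact this.symm
    have hlow : ∀ i ∈ range n, c * g ((i:ℝ)*c) ≤ ∫ u in ((i:ℝ)*c)..(((i:ℝ)+1)*c), g u := by
      intro i _
      have hle : (i:ℝ)*c ≤ ((i:ℝ)+1)*c := by nlinarith
      have h5 : ∫ _ in ((i:ℝ)*c)..(((i:ℝ)+1)*c), g ((i:ℝ)*c) ≤ ∫ u in ((i:ℝ)*c)..(((i:ℝ)+1)*c), g u := by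
        apply intervalIntegral.integral_mono_on hle (intervalIntegrable_const) (hint _ _)
        intro u hu
        exact hg hu.1
      rw [intervalIntegral.integral_const, smul_eq_mul,
        show ((i:ℝ)+1)*c - (i:ℝ)*c = c by ring] at h5
      linarith
    have hup : ∀ i ∈ range n, (∫ u in ((i:ℝ)*c)..(((i:ℝ)+1)*c), g u) ≤ c * g (((i:ℝ)+1)*c) := by
      intro i _
      have hle : (i:ℝ)*c ≤ ((i:ℝ)+1)*c := by nlinarith
      have h5 : (∫ u in ((i:ℝ)*c)..(((i:ℝ)+1)*c), g u) ≤ ∫ _ in ((i:ℝ)*c)..(((i:ℝ)+1)*c), g (((i:ℝ)+1)*c) := by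
        apply intervalIntegral.integral_mono_on hle (hint _ _) (intervalIntegrable_const)
        intro u hu
        exact hg hu.2
      rw [intervalIntegral.integral_const, smul_eq_mul,
        show ((i:ℝ)+1)*c - (i:ℝ)*c = c by ring] at h5
      linarith
    constructor
    · have h1 : I ≤ ∑ i ∈ range n, c * g (((i:ℝ)+1)*c) := by
        rw [hsplit]; exact Finset.sum_le_sum hup
      have h2 : ∑ i ∈ range n, c * g (((i:ℝ)+1)*c)
          = c * ((∑ i ∈ range n, g ((i:ℝ)*c)) + (g h - g 0)) := by
        rw [← Finset.mul_sum]
        congr 1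
        have t2 := Finset.sum_range_succ (fun j : ℕ => g ((j:ℝ)*c)) n
        have t3 := Finset.sum_range_succ' (fun j : ℕ => g ((j:ℝ)*c)) n
        have e1 : ∑ i ∈ range n, g (((i:ℝ)+1)*c)
            = ∑ i ∈ range n, (fun j : ℕ => g ((j:ℝ)*c)) (i+1) := by
          apply Finset.sum_congr rfl
          intro i _
          push_cast
          ring_nf
        simp only [Nat.cast_zero, zero_mul] at t3
        rw [e1, hnc]
        simp only at t2 t3 ⊢
        linarith
      have h3 : c * ((∑ i ∈ range n, g ((i:ℝ)*c)) + (g h - g 0))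
          = c * (∑ i ∈ range n, g ((i:ℝ)*c)) + c * (g h - g 0) := by ring
      linarith
    · rw [hsplit]
      calc c * ∑ i ∈ range n, g ((i:ℝ)*c) = ∑ i ∈ range n, c * g ((i:ℝ)*c) := Finset.mul_sum _ _ _
        _ ≤ _ := Finset.sum_le_sum hlow
  have hdiv : Tendsto (fun n : ℕ => h / n) atTop (𝓝 0) :=
    tendsto_const_div_atTop_nhds_zero_nat h
  have hlowlim : Tendsto (fun n : ℕ => I - (h / n) * (g h - g 0)) atTop (𝓝 I) := by
    have : Tendsto (fun n : ℕ => (h / n) * (g h - g 0)) atTop (𝓝 0) := by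
      simpa using hdiv.mul_const (g h - g 0)
    simpa using (tendsto_const_nhds (x := I)).sub this
  refine tendsto_of_tendsto_of_tendsto_of_le_of_le' hlowlim tendsto_const_nhds ?_ ?_
  · filter_upwards [eventually_ge_atTop 1] with n hn
    exact (key n hn).1
  · filter_upwards [eventually_ge_atTop 1] with n hn
    exact (key n hn).2

lemma aux_step {Ω : Type*} {F : MeasurableSpace Ω} (μ : Measure Ω) [IsProbabilityMeasure μ]
    (N : ℝ → Ω → ℕ) (lam : ℝ≥0) (δ : ℝ) (hδ : 0 < δ)
    (hN0 : ∀ ω, N 0 ω = 0)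
    (hNmeas : Measurable fun p : ℝ × Ω => N p.1 p.2)
    (hNmono : ∀ ω, Monotone fun u => N u ω)
    (hNdist : ∀ u v : ℝ, 0 ≤ u → u ≤ v →
      Measure.map (fun ω => N v ω - N u ω) μ = poissonMeasure (lam * Real.toNNReal (v - u)))
    (hNindep : ∀ n : ℕ, ∀ tt : ℕ → ℝ, Monotone tt → (∀ i, 0 ≤ tt i) →
      iIndepFun
        (fun i : Fin n => fun ω => N (tt (i + 1)) ω - N (tt i) ω) μ)
    {h : ℝ} (hpos : 0 < h) (m : ℕ) (c : ℝ) (hcdef : c = h / ((m:ℝ)+1)) :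
    ∫ ω, Real.exp (-δ * (c * ∑ i ∈ range (m+1), ((N ((i:ℝ) * c) ω : ℝ)))) ∂μ
      = Real.exp (-(lam:ℝ) * (c * ∑ k ∈ range (m+1), (1 - Real.exp (-δ * ((k:ℝ) * c))))) := by
  have hm1 : (0:ℝ) < (m:ℝ)+1 := by positivity
  have hc : 0 < c := hcdef ▸ div_pos hpos hm1
  set tt : ℕ → ℝ := fun j => (j:ℝ) * c with httdef
  have httmono : Monotone tt := fun a b hab =>
    mul_le_mul_of_nonneg_right (by exact_mod_cast hab) hc.le
  have httnn : ∀ i, 0 ≤ tt i := fun i => mul_nonneg (Nat.cast_nonneg i) hc.le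
  have Ntmeas : ∀ t : ℝ, Measurable fun ω => N t ω :=
    fun t => hNmeas.comp (measurable_const.prodMk measurable_id)
  have hDmeas : ∀ i : Fin m, Measurable (fun ω => N (tt ((i:ℕ)+1)) ω - N (tt (i:ℕ)) ω) :=
    fun i => (Ntmeas _).sub (Ntmeas _)
  have hind0 := hNindep m tt httmono httnn
  set X : Fin m → Ω → ℝ := fun i =>
    (fun k : ℕ => (-(c * ((m:ℝ) - (i:ℕ)))) * (k:ℝ)) ∘
      (fun ω => N (tt ((i:ℕ)+1)) ω - N (tt (i:ℕ)) ω) with hXdef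
  have hXindep : iIndepFun X μ :=
    hind0.comp (fun i (k:ℕ) => (-(c * ((m:ℝ) - (i:ℕ)))) * (k:ℝ))
      (fun i => measurable_from_top)
  have hXmeas : ∀ i, Measurable (X i) := fun i =>
    (measurable_from_top (f := fun k : ℕ => (-(c * ((m:ℝ) - (i:ℕ)))) * (k:ℝ))).comp (hDmeas i)
  have hmgf := hXindep.mgf_sum (t := δ) hXmeas Finset.univ
  -- pointwise identification of the sum
  have hptw : ∀ ω, δ * (∑ i ∈ Finset.univ, X i) ω
      = -δ * (c * ∑ i ∈ range (m+1), ((N ((i:ℝ) * c) ω : ℝ))) := by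
    intro ω
    set a : ℕ → ℝ := fun j => ((N (tt j) ω : ℕ) : ℝ) with hadef
    have hcast : ∀ j : ℕ, ((N (tt (j+1)) ω - N (tt j) ω : ℕ) : ℝ) = a (j+1) - a j := by
      intro j
      have hle : N (tt j) ω ≤ N (tt (j+1)) ω := hNmono ω (httmono (Nat.le_succ j))
      rw [hadef]
      push_cast [Nat.cast_sub hle]
      ring
    have hfin : (∑ i ∈ Finset.univ, X i) ω
        = ∑ j ∈ range m, (-(c * ((m:ℝ) - j))) * (a (j+1) - a j) := by
      rw [Finset.sum_apply]
      simp only [hXdef, Function.comp_apply]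
      rw [Fin.sum_univ_eq_sum_range
        (fun j : ℕ => (-(c * ((m:ℝ) - j))) * (((N (tt (j+1)) ω - N (tt j) ω : ℕ)):ℝ)) m]
      exact Finset.sum_congr rfl fun j _ => by rw [hcast j]
    have habel := aux_abel a m
    have ha0 : a 0 = 0 := by
      have : tt 0 = 0 := by simp [httdef]
      simp [hadef, this, hN0 ω]
    have hcollect : ∑ j ∈ range m, (-(c * ((m:ℝ) - j))) * (a (j+1) - a j)
        = -c * ∑ j ∈ range m, ((m:ℝ) - j) * (a (j+1) - a j) := by
      rw [Finset.mul_sum]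
      exact Finset.sum_congr rfl fun j _ => by ring
    have haN : ∀ i : ℕ, a i = ((N ((i:ℝ) * c) ω : ℕ) : ℝ) := fun i => rfl
    rw [hfin, hcollect, habel, ha0]
    simp only [haN]
    ring
  have hLHS : ∫ ω, Real.exp (-δ * (c * ∑ i ∈ range (m+1), ((N ((i:ℝ) * c) ω : ℝ)))) ∂μ
      = mgf (∑ i ∈ Finset.univ, X i) μ δ := by
    unfold mgf
    exact integral_congr_ae (Filter.Eventually.of_forall fun ω =>
      (congrArg Real.exp (hptw ω)).symm)
  -- each factor
  have hprod : ∀ i : Fin m, mgf (X i) μ δ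
      = Real.exp (((lam:ℝ) * c) * (Real.exp (-(δ * c * ((m:ℝ) - (i:ℕ)))) - 1)) := by
    intro i
    set θ : ℝ := -(δ * c * ((m:ℝ) - (i:ℕ))) with hθdef
    have him : ((i:ℕ):ℝ) < (m:ℝ) := by exact_mod_cast i.isLt
    have hθle : θ ≤ 0 := by
      have h9 : 0 ≤ δ * c * ((m:ℝ) - (i:ℕ)) :=
        mul_nonneg (mul_nonneg hδ.le hc.le) (by linarith)
      rw [hθdef]
      linarith
    have harg : tt ((i:ℕ)+1) - tt (i:ℕ) = c := by
      simp only [httdef]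
      push_cast
      ring
    have hDmap := hNdist (tt (i:ℕ)) (tt ((i:ℕ)+1)) (httnn _) (httmono (Nat.le_succ _))
    rw [harg] at hDmap
    have hptw2 : ∀ ω, δ * X i ω = θ * ((N (tt ((i:ℕ)+1)) ω - N (tt (i:ℕ)) ω : ℕ) : ℝ) := by
      intro ω
      simp only [hXdef, Function.comp_apply, hθdef]
      ring
    have hmeasf : Measurable fun k : ℕ => Real.exp (θ * k) := measurable_from_top
    calc mgf (X i) μ δ = ∫ ω, Real.exp (δ * X i ω) ∂μ := rfl
      _ = ∫ ω, Real.exp (θ * ((N (tt ((i:ℕ)+1)) ω - N (tt (i:ℕ)) ω : ℕ) : ℝ)) ∂μ :=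
          integral_congr_ae (Filter.Eventually.of_forall fun ω =>
            congrArg Real.exp (hptw2 ω))
      _ = ∫ k : ℕ, Real.exp (θ * k) ∂(Measure.map (fun ω => N (tt ((i:ℕ)+1)) ω - N (tt (i:ℕ)) ω) μ) :=
          (integral_map (hDmeas i).aemeasurable hmeasf.aestronglyMeasurable).symm
      _ = ∫ k : ℕ, Real.exp (θ * k) ∂(poissonMeasure (lam * Real.toNNReal c)) := by rw [hDmap]
      _ = Real.exp ((lam * Real.toNNReal c : ℝ≥0) * (Real.exp θ - 1)) := aux_poisson_exp _ _ hθle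
      _ = Real.exp (((lam:ℝ) * c) * (Real.exp θ - 1)) := by
          congr 2
          push_cast [Real.coe_toNNReal c hc.le]
          ring
  -- sum of exponents
  have hsumexp : ∑ i : Fin m, (((lam:ℝ) * c) * (Real.exp (-(δ * c * ((m:ℝ) - (i:ℕ)))) - 1))
      = -(lam:ℝ) * (c * ∑ k ∈ range (m+1), (1 - Real.exp (-δ * ((k:ℝ) * c)))) := by
    set φ : ℕ → ℝ := fun k => -((lam:ℝ) * (c * (1 - Real.exp (-δ * ((k:ℝ) * c))))) with hφdef
    have hφ0 : φ 0 = 0 := by simp [hφdef]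
    have hterm : ∀ j : ℕ, j < m →
        ((lam:ℝ) * c) * (Real.exp (-(δ * c * ((m:ℝ) - j))) - 1) = φ (m - j) := by
      intro j hj
      have : ((m - j : ℕ) : ℝ) = (m:ℝ) - j := by
        push_cast [Nat.cast_sub hj.le]
        ring
      rw [hφdef]
      simp only [this]
      rw [show -δ * (((m:ℝ) - j) * c) = -(δ * c * ((m:ℝ) - j)) by ring]
      ring
    rw [Fin.sum_univ_eq_sum_range
      (fun j : ℕ => ((lam:ℝ) * c) * (Real.exp (-(δ * c * ((m:ℝ) - j))) - 1)) m]
    rw [Finset.sum_congr rfl fun j hj => hterm j (Finset.mem_range.mp hj)]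
    rw [aux_reindex φ hφ0 m]
    simp only [hφdef]
    have hS : -(lam:ℝ) * (c * ∑ k ∈ range (m+1), (1 - Real.exp (-δ * ((k:ℝ) * c))))
        = ∑ k ∈ range (m+1), -((lam:ℝ) * (c * (1 - Real.exp (-δ * ((k:ℝ) * c))))) := by
      rw [show -(lam:ℝ) * (c * ∑ k ∈ range (m+1), (1 - Real.exp (-δ * ((k:ℝ) * c))))
          = (-(lam:ℝ) * c) * ∑ k ∈ range (m+1), (1 - Real.exp (-δ * ((k:ℝ) * c))) by ring,
        Finset.mul_sum]
      exact Finset.sum_congr rfl fun k _ => by ring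
    exact hS.symm
  rw [hLHS, hmgf, Finset.prod_congr rfl fun i _ => hprod i, ← Real.exp_sum, hsumexp]

theorem poisson_integrated_laplace
    {Ω : Type*} {F : MeasurableSpace Ω} (μ : Measure Ω) [IsProbabilityMeasure μ]
    (N : ℝ → Ω → ℕ) (lam : ℝ≥0) (hlam : 0 < lam) (δ : ℝ) (hδ : 0 < δ)
    (hN0 : ∀ ω, N 0 ω = 0)
    (hNmeas : Measurable fun p : ℝ × Ω => N p.1 p.2)
    (hNmono : ∀ ω, Monotone fun u => N u ω)
    (hNdist : ∀ u v : ℝ, 0 ≤ u → u ≤ v →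
      Measure.map (fun ω => N v ω - N u ω) μ = poissonMeasure (lam * Real.toNNReal (v - u)))
    (hNindep : ∀ n : ℕ, ∀ tt : ℕ → ℝ, Monotone tt → (∀ i, 0 ≤ tt i) →
      iIndepFun
        (fun i : Fin n => fun ω => N (tt (i + 1)) ω - N (tt i) ω) μ)
    (h : ℝ) (hh : 0 ≤ h) :
    (∫ ω, Real.exp (-δ * ∫ u in (0 : ℝ)..h, (N u ω : ℝ)) ∂μ)
      = Real.exp (-(lam : ℝ) * h + ((lam : ℝ) / δ) * (1 - Real.exp (-δ * h))) := by
  rcases eq_or_lt_of_le hh with h0 | hpos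
  · rw [← h0]
    simp
  -- setup
  have Ntmeas : ∀ t : ℝ, Measurable fun ω => N t ω :=
    fun t => hNmeas.comp (measurable_const.prodMk measurable_id)
  set g : ℝ → ℝ := fun u => 1 - Real.exp (-δ * u) with hgdef
  have hgmono : Monotone g := by
    intro u v huv
    simp only [hgdef]
    have : Real.exp (-δ * v) ≤ Real.exp (-δ * u) :=
      Real.exp_le_exp.mpr (by nlinarith)
    linarith
  -- value of the deterministic integral
  have hgint : ∫ u in (0:ℝ)..h, g u = h - (1 - Real.exp (-δ * h)) / δ := by
    have hcont : Continuous fun u : ℝ => Real.exp (-δ * u) :=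
      Real.continuous_exp.comp (continuous_const.mul continuous_id)
    have hsub : ∫ u in (0:ℝ)..h, g u
        = (∫ _ in (0:ℝ)..h, (1:ℝ)) - ∫ u in (0:ℝ)..h, Real.exp (-δ * u) := by
      simp only [hgdef]
      exact intervalIntegral.integral_sub intervalIntegrable_const
        (hcont.intervalIntegrable 0 h)
    have hexp : ∫ u in (0:ℝ)..h, Real.exp (-δ * u) = (1 - Real.exp (-δ * h)) / δ := by
      have hne : (-δ) ≠ 0 := by linarith
      have := intervalIntegral.integral_comp_mul_left (a := (0:ℝ)) (b := h)
        (f := Real.exp) (c := -δ) hne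
      rw [this]
      simp [Real.exp_zero]
      field_simp
      ring
    rw [hsub, hexp, integral_one]
    ring
  -- the two sequences
  set Sn : ℕ → Ω → ℝ := fun n ω => (h / n) * ∑ i ∈ range n, ((N ((i:ℝ) * (h / n)) ω : ℝ))
    with hSndef
  set En : ℕ → ℝ := fun n =>
    Real.exp (-(lam:ℝ) * ((h / n) * ∑ k ∈ range n, g ((k:ℝ) * (h / n)))) with hEndef
  -- limit of E-integrals by dominated convergence
  have hSnmeas : ∀ n, Measurable (Sn n) := by
    intro n
    apply Measurable.const_mul
    exact Finset.measurable_sum _ fun i _ =>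
      (measurable_from_top (f := fun k : ℕ => (k:ℝ))).comp (Ntmeas _)
  have hT1 : Tendsto (fun n => ∫ ω, Real.exp (-δ * Sn n ω) ∂μ) atTop
      (𝓝 (∫ ω, Real.exp (-δ * ∫ u in (0:ℝ)..h, (N u ω : ℝ)) ∂μ)) := by
    apply tendsto_integral_of_dominated_convergence (bound := fun _ => (1:ℝ))
    · intro n
      exact (Real.measurable_exp.comp ((hSnmeas n).const_mul (-δ))).aestronglyMeasurable
    · exact integrable_const 1
    · intro n
      apply Filter.Eventually.of_forall
      intro ω
      have hnn : 0 ≤ Sn n ω := by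
        apply mul_nonneg (by positivity)
        exact Finset.sum_nonneg fun i _ => Nat.cast_nonneg _
      rw [Real.norm_eq_abs, abs_of_pos (Real.exp_pos _)]
      exact Real.exp_le_one_iff.mpr (by nlinarith)
    · apply Filter.Eventually.of_forall
      intro ω
      have hmon : Monotone fun u : ℝ => ((N u ω : ℕ) : ℝ) :=
        fun u v huv => Nat.cast_le.mpr (hNmono ω huv)
      have := aux_riemann hmon hpos
      exact ((Real.continuous_exp.tendsto _).comp (this.const_mul (-δ)))
  -- limit of the explicit sequence
  have hT2 : Tendsto En atTop
      (𝓝 (Real.exp (-(lam:ℝ) * ∫ u in (0:ℝ)..h, g u))) := by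
    have := aux_riemann hgmono hpos
    exact ((Real.continuous_exp.tendsto _).comp (this.const_mul (-(lam:ℝ))))
  -- the sequences agree eventually
  have heq : (fun n => ∫ ω, Real.exp (-δ * Sn n ω) ∂μ) =ᶠ[atTop] En := by
    filter_upwards [eventually_ge_atTop 1] with n hn
    obtain ⟨m, rfl⟩ := Nat.exists_eq_add_of_le hn
    have hcast : ((1 + m : ℕ) : ℝ) = (m:ℝ) + 1 := by push_cast; ring
    have := aux_step μ N lam δ hδ hN0 hNmeas hNmono hNdist hNindep hpos m
      (h / ((m:ℝ)+1)) rfl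
    simp only [hSndef, hEndef, hgdef]
    rw [show (1 + m) = (m + 1) by ring] at *
    rw [show ((m + 1 : ℕ) : ℝ) = (m:ℝ) + 1 by push_cast; ring]
    exact this
  have hT1' : Tendsto En atTop
      (𝓝 (∫ ω, Real.exp (-δ * ∫ u in (0:ℝ)..h, (N u ω : ℝ)) ∂μ)) :=
    hT1.congr' heq
  have := tendsto_nhds_unique hT1' hT2
  rw [this, hgint]
  congr 1
  field_simp
  ring
end
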